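/- arXiv:1411.4626 — 8 statements merged into one kernel-verified Lean document; each statement's English description precedes it below -/
import Mathlib

section
/- For any real α > 1, the infimum over k ∈ [0,1] of 4k^{α+2} + (1+k)^{α+1}(α - 2k) is strictly positive. -/
/-!
The infimum is attained on the compact interval, so it suffices that the function is positive
pointwise. This is clear unless `2k > α`, which forces `α < 2`. There, dividing by `k ^ (α + 2)` and
substituting `r = 1/k ≥ 1` turns the claim into `(1 + r)^(α+1) (2 - α r) < 4`; Bernoulli's
inequality `(1 + r)^(α-1) < 1 + (α - 1) r` reduces this to `(1 + r)² (2 - r) ≤ 4`, i.e.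
`(r - 1)² (r + 2) ≥ 0`.
-/

open Set

lemma one_add_rpow_mul_two_sub_lt_four {r α : ℝ} (hr : 1 ≤ r) (hα1 : 1 < α) (hα2 : α < 2) :
    (1 + r) ^ (α + 1) * (2 - α * r) < 4 := by
  set A := (1 + r) ^ (α - 1)
  have hA_gt : 1 < A := Real.one_lt_rpow (by linarith) (by linarith)
  have hA_lt : A < 1 + (α - 1) * r :=
    rpow_one_add_lt_one_add_mul_self (by linarith) (by positivity) (by linarith) (by linarith)
  have hsplit : (1 + r) ^ (α + 1) = A * (1 + r) ^ 2 := by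
    rw [← Real.rpow_natCast, ← Real.rpow_add (by linarith)]
    ring_nf
  have hA_mul : A * (2 - α * r) < 2 - r := by
    nlinarith [mul_nonneg (sub_nonneg.2 hr) (sub_nonneg.2 hα1.le)]
  rw [hsplit]
  nlinarith [mul_nonneg (sq_nonneg (r - 1)) (by linarith : (0 : ℝ) ≤ r + 2)]

lemma one_add_rpow_mul_two_mul_sub_lt {α k : ℝ} (hα1 : 1 < α) (hα2 : α < 2) (hk0 : 0 < k)
    (hk1 : k ≤ 1) : (1 + k) ^ (α + 1) * (2 * k - α) < 4 * k ^ (α + 2) := by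
  have hr : 1 ≤ k⁻¹ := one_le_inv₀ hk0 |>.2 hk1
  have hscale : (1 + k) ^ (α + 1) * (2 * k - α)
      = k ^ (α + 2) * ((1 + k⁻¹) ^ (α + 1) * (2 - α * k⁻¹)) := by
    have hpow : k ^ (α + 1) * (1 + k⁻¹) ^ (α + 1) = (1 + k) ^ (α + 1) := by
      rw [← Real.mul_rpow hk0.le (by positivity), mul_add, mul_inv_cancel₀ hk0.ne', mul_one,
        add_comm]
    rw [show α + 2 = α + 1 + 1 by ring, Real.rpow_add_one hk0.ne', ← hpow]
    field_simp
  rw [hscale, mul_comm 4]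
  exact mul_lt_mul_of_pos_left (one_add_rpow_mul_two_sub_lt_four hr hα1 hα2)
    (Real.rpow_pos_of_pos hk0 _)

lemma four_mul_rpow_add_one_add_rpow_mul_pos {α k : ℝ} (hα : 1 < α) (hk : k ∈ Icc (0 : ℝ) 1) :
    0 < 4 * k ^ (α + 2) + (1 + k) ^ (α + 1) * (α - 2 * k) := by
  obtain ⟨hk0, hk1⟩ := hk
  have h1k : 0 < (1 + k) ^ (α + 1) := Real.rpow_pos_of_pos (by linarith) _
  rcases lt_trichotomy (2 * k) α with h | h | h
  · nlinarith [Real.rpow_nonneg hk0 (α + 2)]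
  · have : 0 < k ^ (α + 2) := Real.rpow_pos_of_pos (by linarith) _
    rw [h, sub_self, mul_zero]
    linarith
  · nlinarith [one_add_rpow_mul_two_mul_sub_lt hα (by linarith) (by linarith) hk1]

lemma IsCompact.sInf_image_pos {X : Type*} [TopologicalSpace X] {s : Set X} {f : X → ℝ}
    (hs : IsCompact s) (hne : s.Nonempty) (hf : ContinuousOn f s) (hpos : ∀ x ∈ s, 0 < f x) :
    0 < sInf (f '' s) := by
  obtain ⟨x, hx, hfx⟩ := (hs.image_of_continuousOn hf).sInf_mem (hne.image f)
  exact hfx ▸ hpos x hx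

theorem stmt_0 (α : ℝ) (hα : 1 < α) :
    0 < sInf ((fun k : ℝ => 4 * k ^ (α + 2) + (1 + k) ^ (α + 1) * (α - 2 * k)) ''
      Set.Icc (0 : ℝ) 1) := by
  refine isCompact_Icc.sInf_image_pos (nonempty_Icc.2 zero_le_one) ?_
    fun k hk => four_mul_rpow_add_one_add_rpow_mul_pos hα hk
  exact Continuous.continuousOn (by fun_prop (disch := linarith))
end

section
/- For any real α > 1 and any m ∈ (0, 1/2], we have 4 m^{α+1} + α/m > 2 + α. -/
/-!
Both summands are convex in `m`, so each lies above its tangent line at `m = 1/2`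
(Bernoulli's inequality for `4 m^(α+1) = 2^(1-α) (2m)^(α+1)`, and `1/m ≥ 4 (1 - m)`).
The sum of the two tangent lines has slope `2 (2^(1-α) (α+1) - 2α) ≤ 0`, so it suffices to
check the claim at `m = 1/2`, where it reads `2 - α < 2^(1-α)`; this follows from
`2^x ≥ 1 + x log 2 > 1 + x` for `x < 0`.
-/

open Real

lemma one_add_lt_two_rpow {x : ℝ} (hx : x < 0) : 1 + x < (2 : ℝ) ^ x := by
  have hlog : log 2 < 1 := by linarith [log_two_lt_d9]
  calc 1 + x < x * log 2 + 1 := by nlinarith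
    _ ≤ exp (x * log 2) := add_one_le_exp _
    _ = 2 ^ x := by rw [rpow_def_of_pos two_pos, mul_comm]

lemma four_mul_rpow_eq (α : ℝ) {m : ℝ} (hm : 0 ≤ m) :
    4 * m ^ (α + 1) = 2 ^ (1 - α) * (2 * m) ^ (α + 1) := by
  rw [mul_rpow zero_le_two hm, ← mul_assoc, ← rpow_add two_pos,
    show 1 - α + (α + 1) = (2 : ℕ) by push_cast; ring, rpow_natCast]
  norm_num

lemma four_mul_one_sub_le_inv {m : ℝ} (hm : 0 < m) : 4 * (1 - m) ≤ m⁻¹ := by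
  rw [← one_div, le_div_iff₀ hm]
  nlinarith [sq_nonneg (1 - 2 * m)]

theorem stmt_1 (α m : ℝ) (hα : 1 < α) (hm : m ∈ Set.Ioc (0 : ℝ) (1 / 2)) :
    2 + α < 4 * m ^ (α + 1) + α / m := by
  obtain ⟨hm0, hm2⟩ := hm
  set c := (2 : ℝ) ^ (1 - α)
  have hc_pos : 0 < c := rpow_pos_of_pos two_pos _
  have hc_le : c ≤ 1 := rpow_le_one_of_one_le_of_nonpos one_le_two (by linarith)
  have hc_gt : 2 - α < c := by linarith [one_add_lt_two_rpow (x := 1 - α) (by linarith)]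
  have hslope : c * (α + 1) ≤ 2 * α := by nlinarith
  have hpow : c * (1 + (α + 1) * (2 * m - 1)) ≤ 4 * m ^ (α + 1) := by
    have hB := one_add_mul_self_le_rpow_one_add (show -1 ≤ 2 * m - 1 by linarith)
      (show 1 ≤ α + 1 by linarith)
    rw [add_sub_cancel] at hB
    rw [four_mul_rpow_eq α hm0.le]
    exact mul_le_mul_of_nonneg_left hB hc_pos.le
  have hinv : α * (4 * (1 - m)) ≤ α / m :=
    mul_le_mul_of_nonneg_left (four_mul_one_sub_le_inv hm0) (by linarith)
  linarith [mul_nonneg (by linarith : (0 : ℝ) ≤ 1 - 2 * m)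
    (by linarith : 0 ≤ 2 * α - c * (α + 1))]
end

section
/- Let α > 1, x₀ ∈ ℝ, K₂ > 0, and let g(t) = K₂(t - x₀)^α for t ≥ x₀ and g(t) = 0 for t < x₀. Then there exists a constant K > 0 depending only on α and K₂ such that for all τ⁻ ≤ x₀ ≤ τ⁺, setting τ = (τ⁻+τ⁺)/2, one has ∫_{τ⁻}^{τ} ((τ⁻+τ)/2 - t) g(t) dt + ∫_{τ}^{τ⁺} (t - (τ+τ⁺)/2) g(t) dt ≥ K (τ⁺ - x₀)^{α+1} (τ⁺ - τ⁻). -/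
/-!
Write `d = τ⁺ - x₀` and `h = (τ⁺ - τ⁻)/2 ≥ d/2`. Since `g t = K₂ (max (t - x₀) 0)^α` and
`t ↦ (t - c) u₊^(α+1)/(α+1) - u₊^(α+2)/((α+1)(α+2))` (with `u₊ = max (t - x₀) 0`) is a primitive
of `(t - c) u₊^α`, the left-hand side equals
`K₂/((α+1)(α+2)) · ((α+2)(h/2) d^(α+1) - d^(α+2) + 2 (max (d - h) 0)^(α+2))`.
For `h ≥ d` the last term is dropped. For `h < d` it is bounded below by the tangent line of
`u ↦ u^(α+2)` at `d/2`, which leaves an expression affine in `d ∈ [h, 2h]`; at `d = 2h` its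
positivity comes from `2^(1-α) ≥ 1 - (α - 1) log 2` and `log 2 < 7/10`.
The constant degenerates as `α → 1`: for `α = 1` and `τ⁻ = x₀` the function `g` is affine on
`[τ⁻, τ⁺]`, and the left-hand side vanishes on affine functions.
-/

open Real Set intervalIntegral

theorem hasDerivAt_max_zero_rpow {q : ℝ} (hq : 1 < q) (u : ℝ) :
    HasDerivAt (fun u => max u 0 ^ q) (q * max u 0 ^ (q - 1)) u := by
  have hcont : ∀ p : ℝ, 0 < p → Continuous fun u : ℝ => max u 0 ^ p := fun p hp =>
    (continuous_id.max continuous_const).rpow_const fun _ => Or.inr hp.le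
  have off_zero : ∀ y ≠ (0 : ℝ), HasDerivAt (fun u => max u 0 ^ q) (q * max y 0 ^ (q - 1)) y := by
    intro y hy
    rcases hy.lt_or_gt with hy | hy
    · rw [max_eq_right hy.le, zero_rpow (by linarith), mul_zero]
      refine (hasDerivAt_const y 0).congr_of_eventuallyEq ?_
      filter_upwards [Iio_mem_nhds hy] with z hz
      rw [max_eq_right (le_of_lt hz), zero_rpow (by linarith)]
    · rw [max_eq_left hy.le]
      refine (hasDerivAt_rpow_const (Or.inl hy.ne')).congr_of_eventuallyEq ?_
      filter_upwards [Ioi_mem_nhds hy] with z hz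
      rw [max_eq_left (le_of_lt hz)]
  rcases eq_or_ne u 0 with rfl | hu
  · exact hasDerivAt_of_hasDerivAt_of_ne off_zero (hcont q (by linarith)).continuousAt
      (continuous_const.mul (hcont (q - 1) (by linarith))).continuousAt
  · exact off_zero u hu

theorem rpow_add_mul_sub_le_rpow {p x y : ℝ} (hp : 1 ≤ p) (hx : 0 ≤ x) (hy : 0 < y) :
    y ^ p + p * y ^ (p - 1) * (x - y) ≤ x ^ p := by
  have h := one_add_mul_self_le_rpow_one_add (s := x / y - 1) (by
    have : 0 ≤ x / y := by positivity
    linarith) hp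
  rw [add_sub_cancel, div_rpow hx hy.le, le_div_iff₀ (by positivity)] at h
  rw [rpow_sub_one hy.ne']
  calc y ^ p + p * (y ^ p / y) * (x - y) = (1 + p * (x / y - 1)) * y ^ p := by
        field_simp
    _ ≤ x ^ p := h

theorem half_rpow_bounds {α : ℝ} (hα : 1 < α) :
    (1 / 2 : ℝ) ^ (α + 1) ≤ 1 / 4 ∧ 1 - 7 / 10 * (α - 1) ≤ 4 * (1 / 2 : ℝ) ^ (α + 1) := by
  have hsplit : (1 / 2 : ℝ) ^ (α + 1) = (1 / 2) ^ (α - 1) / 4 := by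
    rw [show α + 1 = (α - 1) + 2 by ring, rpow_add (by norm_num)]
    norm_num
    ring
  have hle : (1 / 2 : ℝ) ^ (α - 1) ≤ 1 := rpow_le_one (by norm_num) (by norm_num) (by linarith)
  have hge : 1 - log 2 * (α - 1) ≤ (1 / 2 : ℝ) ^ (α - 1) := by
    rw [rpow_def_of_pos (by norm_num), one_div, log_inv]
    linarith [add_one_le_exp (-log 2 * (α - 1))]
  rw [hsplit]
  constructor
  · linarith
  · nlinarith [log_two_lt_d9]

theorem integral_sub_mul_max_sub_rpow {α : ℝ} (hα : 0 < α) (x₀ c p q : ℝ) :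
    ∫ t in p..q, (t - c) * max (t - x₀) 0 ^ α =
      ((q - c) * max (q - x₀) 0 ^ (α + 1) / (α + 1)
          - max (q - x₀) 0 ^ (α + 2) / ((α + 1) * (α + 2)))
        - ((p - c) * max (p - x₀) 0 ^ (α + 1) / (α + 1)
          - max (p - x₀) 0 ^ (α + 2) / ((α + 1) * (α + 2))) := by
  have hderiv : ∀ t, HasDerivAt (fun t => (t - c) * max (t - x₀) 0 ^ (α + 1) / (α + 1)
      - max (t - x₀) 0 ^ (α + 2) / ((α + 1) * (α + 2))) ((t - c) * max (t - x₀) 0 ^ α) t := by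
    intro t
    have h1 := HasDerivAt.comp_sub_const t x₀
      (hasDerivAt_max_zero_rpow (q := α + 1) (by linarith) _)
    have h2 := HasDerivAt.comp_sub_const t x₀
      (hasDerivAt_max_zero_rpow (q := α + 2) (by linarith) _)
    refine ((((hasDerivAt_id' t).sub_const c).mul h1).div_const (α + 1) |>.sub
      (h2.div_const ((α + 1) * (α + 2)))).congr_deriv ?_
    rw [add_sub_cancel_right, show α + 2 - 1 = α + 1 by ring]
    field_simp
    ring
  refine integral_eq_sub_of_hasDerivAt (fun t _ => hderiv t) (Continuous.intervalIntegrable ?_ p q)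
  exact (continuous_id.sub continuous_const).mul
    (((continuous_id.sub continuous_const).max continuous_const).rpow_const fun _ => Or.inr hα.le)

theorem midpoint_integrals_eq_closed_form {α : ℝ} (hα : 0 < α) (K₂ x₀ τm τp : ℝ) (hm : τm ≤ x₀) :
    (∫ t in τm..((τm + τp) / 2), ((τm + (τm + τp) / 2) / 2 - t) * (K₂ * max (t - x₀) 0 ^ α)) +
        (∫ t in ((τm + τp) / 2)..τp, (t - ((τm + τp) / 2 + τp) / 2) * (K₂ * max (t - x₀) 0 ^ α)) =
      K₂ / ((α + 1) * (α + 2)) * ((α + 2) * ((τp - τm) / 4) * max (τp - x₀) 0 ^ (α + 1)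
        - max (τp - x₀) 0 ^ (α + 2) + 2 * max ((τm + τp) / 2 - x₀) 0 ^ (α + 2)) := by
  have hneg : ∀ c : ℝ, (fun t => (c - t) * (K₂ * max (t - x₀) 0 ^ α)) =
      fun t => -K₂ * ((t - c) * max (t - x₀) 0 ^ α) := fun c => funext fun t => by ring
  have hpos : ∀ c : ℝ, (fun t => (t - c) * (K₂ * max (t - x₀) 0 ^ α)) =
      fun t => K₂ * ((t - c) * max (t - x₀) 0 ^ α) := fun c => funext fun t => by ring
  rw [hneg, hpos, integral_const_mul, integral_const_mul, integral_sub_mul_max_sub_rpow hα,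
    integral_sub_mul_max_sub_rpow hα, max_eq_right (sub_nonpos.2 hm), zero_rpow (by linarith),
    zero_rpow (by linarith)]
  field_simp
  ring

theorem le_midpoint_closed_form {α d h : ℝ} (hα : 1 < α) (hd : 0 ≤ d) (hdh : d ≤ 2 * h) :
    (α - 1) / 10 * h * d ^ (α + 1) ≤
      (α + 2) * (h / 2) * d ^ (α + 1) - d ^ (α + 2) + 2 * max (d - h) 0 ^ (α + 2) := by
  have hD : 0 ≤ d ^ (α + 1) := rpow_nonneg hd _
  have hsucc : d ^ (α + 2) = d ^ (α + 1) * d := by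
    rw [show α + 2 = α + 1 + 1 by ring, rpow_add_one' hd (by linarith)]
  rw [hsucc]
  rcases le_or_gt d h with hle | hlt
  · rw [max_eq_right (by linarith), zero_rpow (by linarith)]
    nlinarith [mul_nonneg hD (sub_nonneg.2 hle), mul_nonneg (mul_nonneg hD (hd.trans hle))
      (by linarith : (0 : ℝ) ≤ α - 1)]
  · have hd0 : 0 < d := by linarith
    obtain ⟨hσ_le, hσ_ge⟩ := half_rpow_bounds hα
    set σ := (1 / 2 : ℝ) ^ (α + 1) with hσ
    have htangent := rpow_add_mul_sub_le_rpow (p := α + 2) (by linarith) (sub_nonneg.2 hlt.le)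
      (half_pos hd0)
    rw [show α + 2 - 1 = α + 1 by ring, show α + 2 = α + 1 + 1 by ring,
      rpow_add_one' (by linarith) (by linarith), div_eq_mul_one_div d 2,
      mul_rpow hd (by norm_num), ← hσ] at htangent
    rw [max_eq_left (by linarith), show α + 2 = α + 1 + 1 by ring]
    have hB : 0 ≤ (α + 2) * h / 2 - d + σ * (d + (α + 2) * (d - 2 * h)) - (α - 1) / 10 * h := by
      have hh : 0 < h := by linarith
      have hY : 0 ≤ α / 2 - σ * (α + 1) - (α - 1) / 10 := by nlinarith
      have hX : 0 ≤ (α - 2) / 2 + 2 * σ - (α - 1) / 10 := by linarith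
      refine nonneg_of_mul_nonneg_right ?_ hh
      -- the bracket is affine in `d`, so it suffices that it is nonnegative at `d = h` and `d = 2h`
      have hlin : h * ((α + 2) * h / 2 - d + σ * (d + (α + 2) * (d - 2 * h)) - (α - 1) / 10 * h) =
          (d - h) * h * ((α - 2) / 2 + 2 * σ - (α - 1) / 10)
            + (2 * h - d) * h * (α / 2 - σ * (α + 1) - (α - 1) / 10) := by ring
      rw [hlin]
      exact add_nonneg (mul_nonneg (mul_nonneg (by linarith) hh.le) hX)
        (mul_nonneg (mul_nonneg (by linarith) hh.le) hY)
    nlinarith [mul_nonneg hD hB]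

theorem stmt_4 (α x₀ K₂ : ℝ) (hα : 1 < α) (hK₂ : 0 < K₂)
    (g : ℝ → ℝ) (hg : ∀ t, g t = if x₀ ≤ t then K₂ * (t - x₀) ^ α else 0) :
    ∃ K : ℝ, 0 < K ∧ ∀ τm τp : ℝ, τm ≤ x₀ → x₀ ≤ τp →
      K * (τp - x₀) ^ (α + 1) * (τp - τm) ≤
        (∫ t in τm..((τm + τp) / 2), ((τm + (τm + τp) / 2) / 2 - t) * g t) +
          (∫ t in ((τm + τp) / 2)..τp, (t - ((τm + τp) / 2 + τp) / 2) * g t) := by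
  have hg' : g = fun t => K₂ * max (t - x₀) 0 ^ α := funext fun t => by
    rw [hg t]
    split_ifs with ht
    · rw [max_eq_left (sub_nonneg.2 ht)]
    · rw [max_eq_right (by linarith), zero_rpow (by linarith), mul_zero]
  have hα12 : 0 < (α + 1) * (α + 2) := by nlinarith
  refine ⟨K₂ * (α - 1) / (20 * ((α + 1) * (α + 2))),
    div_pos (mul_pos hK₂ (by linarith)) (by linarith), fun τm τp hm hp => ?_⟩
  have key := le_midpoint_closed_form hα (sub_nonneg.2 hp)
    (show τp - x₀ ≤ 2 * ((τp - τm) / 2) by linarith)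
  rw [hg', midpoint_integrals_eq_closed_form (by linarith) K₂ x₀ τm τp hm,
    max_eq_left (sub_nonneg.2 hp), show (τm + τp) / 2 - x₀ = (τp - x₀) - (τp - τm) / 2 by ring]
  calc K₂ * (α - 1) / (20 * ((α + 1) * (α + 2))) * (τp - x₀) ^ (α + 1) * (τp - τm)
      = K₂ / ((α + 1) * (α + 2)) * ((α - 1) / 10 * ((τp - τm) / 2) * (τp - x₀) ^ (α + 1)) := by
        field_simp
        ring
    _ ≤ _ := by
      refine mul_le_mul_of_nonneg_left (key.trans_eq ?_) (div_nonneg hK₂.le hα12.le)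
      ring
end

section
/- Let G₀, G₁, G₂, ... be differentiable functions from [0,1] to ℝ, each with convex derivative. If sup_{t∈[0,1]} |G_k(t) - G₀(t)| → 0 as k → ∞, then for any fixed δ ∈ (0, 1/2], sup_{t∈[δ,1-δ]} |G_k'(t) - G₀'(t)| → 0. -/
open Set Filter Topology

/-!
Write `f k` for the derivative of `G k`. Convexity squeezes `f k t`: from above by its values
at points on either side of `t`, and from below by extrapolating the chord through two points
to the right of `t`. By the mean value theorem these points can be taken where `f k` equals a
difference quotient of `G k` with step `h`; such a quotient is within `2 ‖G k - G 0‖ / h` of the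
corresponding quotient of `G 0`, which is in turn a value of `f 0` near `t`, hence close to
`f 0 t` by uniform continuity of `f 0` on a compact subinterval of `(0, 1)`. Fix `h` first,
then take `k` large.
-/

section SupNorm

variable {ι α : Type*} {l : Filter ι} {F : ι → α → ℝ} {f : α → ℝ} {s : Set α}

lemma tendstoUniformlyOn_of_tendsto_iSup_abs_sub
    (hbdd : ∀ i, BddAbove (range fun x : s => |F i x - f x|))
    (h : Tendsto (fun i => ⨆ x : s, |F i x - f x|) l (𝓝 0)) :
    TendstoUniformlyOn F f l s := by
  refine Metric.tendstoUniformlyOn_iff.2 fun ε hε => ?_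
  filter_upwards [h.eventually (Iio_mem_nhds hε)] with i hi x hx
  rw [Real.dist_eq, abs_sub_comm]
  exact (le_ciSup (hbdd i) ⟨x, hx⟩).trans_lt hi

lemma TendstoUniformlyOn.tendsto_iSup_abs_sub (h : TendstoUniformlyOn F f l s) :
    Tendsto (fun i => ⨆ x : s, |F i x - f x|) l (𝓝 0) := by
  refine Metric.tendsto_nhds.2 fun ε hε => ?_
  filter_upwards [Metric.tendstoUniformlyOn_iff.1 h (ε / 2) (half_pos hε)] with i hi
  have hsup : ⨆ x : s, |F i x - f x| ≤ ε / 2 :=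
    Real.iSup_le (fun x => by rw [abs_sub_comm]; exact (hi x x.2).le) (half_pos hε).le
  rw [Real.dist_eq, sub_zero, abs_of_nonneg (Real.iSup_nonneg fun _ => abs_nonneg _)]
  linarith

end SupNorm

lemma exists_derivWithin_eq_slope_of_Icc_subset {g : ℝ → ℝ} {s : Set ℝ} {a b : ℝ}
    (hg : DifferentiableOn ℝ g s) (hab : a < b) (hs : Icc a b ⊆ s) :
    ∃ c ∈ Ioo a b, derivWithin g s c = (g b - g a) / (b - a) := by
  obtain ⟨c, hc, hslope⟩ := exists_deriv_eq_slope g hab (hg.continuousOn.mono hs)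
    (hg.mono (Ioo_subset_Icc_self.trans hs))
  have hs_nhds : s ∈ 𝓝 c := mem_of_superset (Ioo_mem_nhds hc.1 hc.2) (Ioo_subset_Icc_self.trans hs)
  exact ⟨c, hc, by rw [derivWithin_of_mem_nhds hs_nhds, hslope]⟩

lemma exists_mem_Ioo_abs_derivWithin_sub_le {g g₀ : ℝ → ℝ} {s : Set ℝ} {a b y η ω : ℝ}
    (hg : DifferentiableOn ℝ g s) (hg₀ : DifferentiableOn ℝ g₀ s) (hab : a < b)
    (hs : Icc a b ⊆ s) (ha : |g a - g₀ a| ≤ η) (hb : |g b - g₀ b| ≤ η)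
    (hω : ∀ x ∈ Ioo a b, |derivWithin g₀ s x - y| ≤ ω) :
    ∃ x ∈ Ioo a b, |derivWithin g s x - y| ≤ 2 * η / (b - a) + ω := by
  obtain ⟨x, hx, hgx⟩ := exists_derivWithin_eq_slope_of_Icc_subset hg hab hs
  obtain ⟨x₀, hx₀, hg₀x₀⟩ := exists_derivWithin_eq_slope_of_Icc_subset hg₀ hab hs
  have hslopes : |derivWithin g s x - derivWithin g₀ s x₀| ≤ 2 * η / (b - a) := by
    rw [hgx, hg₀x₀, ← sub_div, abs_div, abs_of_pos (sub_pos.2 hab)]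
    gcongr
    calc |g b - g a - (g₀ b - g₀ a)| = |(g b - g₀ b) - (g a - g₀ a)| := by ring_nf
      _ ≤ |g b - g₀ b| + |g a - g₀ a| := abs_sub _ _
      _ ≤ 2 * η := by linarith
  refine ⟨x, hx, ?_⟩
  calc |derivWithin g s x - y|
      ≤ |derivWithin g s x - derivWithin g₀ s x₀| + |derivWithin g₀ s x₀ - y| := abs_sub_le _ _ _
    _ ≤ 2 * η / (b - a) + ω := add_le_add hslopes (hω x₀ hx₀)

lemma ConvexOn.abs_sub_le_three_mul {s : Set ℝ} {f : ℝ → ℝ} (hf : ConvexOn ℝ s f)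
    {t x₁ x₂ x₃ y e : ℝ} (ht : t ∈ s) (hx₁ : x₁ ∈ s) (hx₂ : x₂ ∈ s) (hx₃ : x₃ ∈ s)
    (h₁ : x₁ < t) (h₂ : t < x₂) (h₃ : x₂ - t ≤ x₃ - x₂)
    (he₁ : |f x₁ - y| ≤ e) (he₂ : |f x₂ - y| ≤ e) (he₃ : |f x₃ - y| ≤ e) :
    |f t - y| ≤ 3 * e := by
  have hupper : f t ≤ max (f x₁) (f x₂) :=
    hf.le_on_segment hx₁ hx₂ (segment_eq_Icc (h₁.trans h₂).le ▸ ⟨h₁.le, h₂.le⟩)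
  -- slopes of a convex function increase, and the step `x₂ - t` is the shorter one
  have hlower : f x₂ - f t ≤ max 0 (f x₃ - f x₂) := by
    have hslope := hf.slope_mono_adjacent ht hx₃ h₂ (by linarith)
    rw [div_le_div_iff₀ (by linarith) (by linarith)] at hslope
    rcases le_or_gt (f x₂ - f t) 0 with hneg | hpos
    · exact hneg.trans (le_max_left _ _)
    · refine le_max_of_le_right ?_
      nlinarith
  rw [abs_le] at he₁ he₂ he₃ ⊢
  have hmax₁₂ : max (f x₁) (f x₂) ≤ y + e := max_le (by linarith) (by linarith)
  have hmax₀₃ : max 0 (f x₃ - f x₂) ≤ 2 * e := max_le (by linarith) (by linarith)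
  constructor <;> linarith

lemma abs_derivWithin_sub_le_of_abs_sub_le {g g₀ : ℝ → ℝ} {a b t h η ω : ℝ}
    (hg : DifferentiableOn ℝ g (Icc a b)) (hg₀ : DifferentiableOn ℝ g₀ (Icc a b))
    (hconv : ConvexOn ℝ (Icc a b) (derivWithin g (Icc a b)))
    (hclose : ∀ x ∈ Icc a b, |g x - g₀ x| ≤ η)
    (hh : 0 < h) (hat : a ≤ t - h) (htb : t + 3 * h ≤ b)
    (hω : ∀ x ∈ Ioo (t - h) (t + 3 * h),
      |derivWithin g₀ (Icc a b) x - derivWithin g₀ (Icc a b) t| ≤ ω) :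
    |derivWithin g (Icc a b) t - derivWithin g₀ (Icc a b) t| ≤ 3 * (2 * η / h + ω) := by
  have hmem : ∀ x, t - h ≤ x → x ≤ t + 3 * h → x ∈ Icc a b := fun x h₁ h₂ =>
    ⟨by linarith, by linarith⟩
  have happrox : ∀ u, t - h ≤ u → u + h ≤ t + 3 * h → ∃ x ∈ Ioo u (u + h),
      |derivWithin g (Icc a b) x - derivWithin g₀ (Icc a b) t| ≤ 2 * η / h + ω := by
    intro u hu₁ hu₂
    have key := exists_mem_Ioo_abs_derivWithin_sub_le hg hg₀ (lt_add_of_pos_right u hh)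
      (fun x hx => hmem x (by linarith [hx.1]) (by linarith [hx.2]))
      (hclose u (hmem u hu₁ (by linarith))) (hclose (u + h) (hmem _ (by linarith) hu₂))
      (fun x hx => hω x ⟨by linarith [hx.1], by linarith [hx.2]⟩)
    rwa [add_sub_cancel_left] at key
  obtain ⟨x₁, hx₁, he₁⟩ := happrox (t - h) le_rfl (by linarith)
  obtain ⟨x₂, hx₂, he₂⟩ := happrox t (by linarith) (by linarith)
  obtain ⟨x₃, hx₃, he₃⟩ := happrox (t + 2 * h) (by linarith) (by linarith)
  rw [sub_add_cancel] at hx₁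
  exact hconv.abs_sub_le_three_mul (hmem t (by linarith) (by linarith))
    (hmem x₁ hx₁.1.le (by linarith [hx₁.2])) (hmem x₂ (by linarith [hx₂.1]) (by linarith [hx₂.2]))
    (hmem x₃ (by linarith [hx₃.1]) (by linarith [hx₃.2])) hx₁.2 hx₂.1
    (by linarith [hx₂.1, hx₂.2, hx₃.1]) he₁ he₂ he₃

theorem TendstoUniformlyOn.derivWithin_of_convexOn {ι : Type*} {l : Filter ι}
    {G : ι → ℝ → ℝ} {g : ℝ → ℝ} {a b c d : ℝ}
    (hG : ∀ i, DifferentiableOn ℝ (G i) (Icc a b)) (hg : DifferentiableOn ℝ g (Icc a b))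
    (hconv : ∀ i, ConvexOn ℝ (Icc a b) (derivWithin (G i) (Icc a b)))
    (hcont : ContinuousOn (derivWithin g (Icc a b)) (Ioo a b))
    (hunif : TendstoUniformlyOn G g l (Icc a b)) (hac : a < c) (hdb : d < b) :
    TendstoUniformlyOn (fun i => derivWithin (G i) (Icc a b)) (derivWithin g (Icc a b)) l
      (Icc c d) := by
  refine Metric.tendstoUniformlyOn_iff.2 fun ε hε => ?_
  obtain ⟨h₀, hh₀, hah₀, hh₀b⟩ : ∃ h₀ > 0, a < c - h₀ ∧ d + 3 * h₀ < b :=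
    ⟨min (c - a) (b - d) / 4, by positivity, by linarith [min_le_left (c - a) (b - d)],
      by linarith [min_le_right (c - a) (b - d)]⟩
  have hUC : UniformContinuousOn (derivWithin g (Icc a b)) (Icc (c - h₀) (d + 3 * h₀)) :=
    isCompact_Icc.uniformContinuousOn_of_continuous
      (hcont.mono (Icc_subset_Ioo hah₀ hh₀b))
  obtain ⟨r, hr, hmod⟩ := Metric.uniformContinuousOn_iff.1 hUC (ε / 12) (by positivity)
  obtain ⟨h, hh, hh_le, hh_r⟩ : ∃ h > 0, h ≤ h₀ ∧ h ≤ r / 3 :=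
    ⟨min h₀ (r / 3), lt_min hh₀ (by positivity), min_le_left _ _, min_le_right _ _⟩
  filter_upwards [Metric.tendstoUniformlyOn_iff.1 hunif (ε * h / 24) (by positivity)]
    with i hi t ht
  have hclose : ∀ x ∈ Icc a b, |G i x - g x| ≤ ε * h / 24 := fun x hx => by
    rw [abs_sub_comm]; exact (hi x hx).le
  have hω : ∀ x ∈ Ioo (t - h) (t + 3 * h),
      |derivWithin g (Icc a b) x - derivWithin g (Icc a b) t| ≤ ε / 12 := by
    intro x hx
    refine (hmod x ⟨by linarith [hx.1, ht.1], by linarith [hx.2, ht.2]⟩ t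
      ⟨by linarith [ht.1], by linarith [ht.2]⟩ ?_).le
    rw [Real.dist_eq, abs_lt]
    constructor <;> linarith [hx.1, hx.2]
  have key := abs_derivWithin_sub_le_of_abs_sub_le (hG i) hg (hconv i) hclose hh
    (by linarith [ht.1]) (by linarith [ht.2]) hω
  rw [Real.dist_eq, abs_sub_comm]
  calc _ ≤ 3 * (2 * (ε * h / 24) / h + ε / 12) := key
    _ = ε / 2 := by field_simp; ring
    _ < ε := half_lt_self hε

theorem stmt_5 (G : ℕ → ℝ → ℝ)
    (hdiff : ∀ k, DifferentiableOn ℝ (G k) (Icc (0 : ℝ) 1))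
    (hconv : ∀ k, ConvexOn ℝ (Icc (0 : ℝ) 1) (fun t => derivWithin (G k) (Icc (0 : ℝ) 1) t))
    (hunif : Tendsto (fun k => ⨆ t : Icc (0 : ℝ) 1, |G k t - G 0 t|) atTop (nhds 0))
    (δ : ℝ) (hδ : δ ∈ Ioc (0 : ℝ) (1 / 2)) :
    Tendsto (fun k => ⨆ t : Icc δ (1 - δ),
        |derivWithin (G k) (Icc (0 : ℝ) 1) t - derivWithin (G 0) (Icc (0 : ℝ) 1) t|)
      atTop (nhds 0) := by
  have hbdd : ∀ k, BddAbove (range fun t : Icc (0 : ℝ) 1 => |G k t - G 0 t|) := fun k => by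
    have hK := isCompact_Icc.image_of_continuousOn
      ((hdiff k).continuousOn.sub (hdiff 0).continuousOn).abs
    rw [image_eq_range] at hK
    exact hK.bddAbove
  have hcont : ContinuousOn (derivWithin (G 0) (Icc (0 : ℝ) 1)) (Ioo 0 1) :=
    ((hconv 0).subset Ioo_subset_Icc_self (convex_Ioo 0 1)).continuousOn isOpen_Ioo
  exact TendstoUniformlyOn.tendsto_iSup_abs_sub <|
    (tendstoUniformlyOn_of_tendsto_iSup_abs_sub hbdd hunif).derivWithin_of_convexOn hdiff
      (hdiff 0) hconv hcont hδ.1 (by linarith [hδ.1])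
end

section
/- Let G₀, G₁, G₂, ... be differentiable functions from [0,1] to ℝ with convex derivatives, and suppose sup_{t∈[0,1]}|G_k(t) - G₀(t)| → 0. Then liminf_{k→∞} inf_{t∈[0,1]} (G_k'(t) - G₀'(t)) ≥ 0. -/
/-!
A convex function on a closed interval can only jump at an endpoint, while a derivative that has
a one-sided limit at an endpoint equals that limit there; hence the convex derivative `G₀'` is
continuous, and so uniformly continuous, on `[0,1]`. Given `t`, take two windows of a small
length `h` on the side of `t` away from the nearer endpoint, at distances `0` and `2h` from `t`.
By the mean value theorem each window contains a point where `G_k'` equals the chord slope of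
`G_k`, which is within `2 sup |G_k - G₀| / h` of a value of `G₀'` in the same window, hence close
to `G₀'(t)` for large `k`. Convexity of `G_k'` then bounds `G_k'(t)` from below by its value at
the nearer point minus its oscillation between the two points.
-/

open Set Filter Topology

section Endpoints

variable {a b L : ℝ}

lemma ConvexOn.exists_tendsto_nhdsGT {f : ℝ → ℝ} (hf : ConvexOn ℝ (Icc a b) f) (hab : a < b) :
    ∃ L, Tendsto f (𝓝[>] a) (𝓝 L) := by
  obtain ⟨c, hac, hcb⟩ := exists_between hab
  have hc : c ∈ Icc a b := ⟨hac.le, hcb.le⟩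
  have hsub : Ioo a c ⊆ Icc a b \ {c} := fun x hx => ⟨⟨hx.1.le, hx.2.le.trans hcb.le⟩, hx.2.ne⟩
  have hmono : MonotoneOn (slope f c) (Ioo a c) := (hf.slope_mono hc).mono hsub
  have hbdd : BddBelow (slope f c '' Ioo a c) := ⟨slope f c a, by
    rintro _ ⟨x, hx, rfl⟩
    exact hf.slope_mono hc ⟨left_mem_Icc.2 hab.le, hac.ne⟩ (hsub hx) hx.1.le⟩
  have hslope := hmono.tendsto_nhdsWithin_Ioo_right (nonempty_Ioo.2 hac) hbdd
  refine ⟨(a - c) * sInf (slope f c '' Ioo a c) + f c, ?_⟩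
  refine (((tendsto_nhdsWithin_of_tendsto_nhds tendsto_id).sub_const c).mul hslope |>.add_const
    (f c)).congr' ?_
  filter_upwards [Ioo_mem_nhdsGT hac] with x hx
  simpa using sub_smul_slope_vadd f c x

lemma ConvexOn.exists_tendsto_nhdsLT {f : ℝ → ℝ} (hf : ConvexOn ℝ (Icc a b) f) (hab : a < b) :
    ∃ L, Tendsto f (𝓝[<] b) (𝓝 L) := by
  obtain ⟨c, hac, hcb⟩ := exists_between hab
  have hc : c ∈ Icc a b := ⟨hac.le, hcb.le⟩
  have hsub : Ioo c b ⊆ Icc a b \ {c} := fun x hx => ⟨⟨hac.le.trans hx.1.le, hx.2.le⟩, hx.1.ne'⟩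
  have hmono : MonotoneOn (slope f c) (Ioo c b) := (hf.slope_mono hc).mono hsub
  have hbdd : BddAbove (slope f c '' Ioo c b) := ⟨slope f c b, by
    rintro _ ⟨x, hx, rfl⟩
    exact hf.slope_mono hc (hsub hx) ⟨right_mem_Icc.2 hab.le, hcb.ne'⟩ hx.2.le⟩
  have hslope := hmono.tendsto_nhdsWithin_Ioo_left (nonempty_Ioo.2 hcb) hbdd
  refine ⟨(b - c) * sSup (slope f c '' Ioo c b) + f c, ?_⟩
  refine (((tendsto_nhdsWithin_of_tendsto_nhds tendsto_id).sub_const c).mul hslope |>.add_const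
    (f c)).congr' ?_
  filter_upwards [Ioo_mem_nhdsLT hcb] with x hx
  simpa using sub_smul_slope_vadd f c x

variable {F : ℝ → ℝ}

lemma derivWithin_Icc_left_eq_of_tendsto (hab : a < b) (hF : DifferentiableOn ℝ F (Icc a b))
    (hL : Tendsto (derivWithin F (Icc a b)) (𝓝[>] a) (𝓝 L)) :
    derivWithin F (Icc a b) a = L := by
  have hderiv : deriv F =ᶠ[𝓝[>] a] derivWithin F (Icc a b) := by
    filter_upwards [Ioo_mem_nhdsGT hab] with x hx
    exact (derivWithin_of_mem_nhds (Icc_mem_nhds hx.1 hx.2)).symm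
  have := hasDerivWithinAt_Ici_of_tendsto_deriv hF (hF.continuousOn.continuousWithinAt
    (left_mem_Icc.2 hab.le)) (Icc_mem_nhdsGT hab) (hL.congr' hderiv.symm)
  exact (this.mono Icc_subset_Ici_self).derivWithin (uniqueDiffOn_Icc hab _ (left_mem_Icc.2 hab.le))

lemma derivWithin_Icc_right_eq_of_tendsto (hab : a < b) (hF : DifferentiableOn ℝ F (Icc a b))
    (hL : Tendsto (derivWithin F (Icc a b)) (𝓝[<] b) (𝓝 L)) :
    derivWithin F (Icc a b) b = L := by
  have hderiv : deriv F =ᶠ[𝓝[<] b] derivWithin F (Icc a b) := by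
    filter_upwards [Ioo_mem_nhdsLT hab] with x hx
    exact (derivWithin_of_mem_nhds (Icc_mem_nhds hx.1 hx.2)).symm
  have := hasDerivWithinAt_Iic_of_tendsto_deriv hF (hF.continuousOn.continuousWithinAt
    (right_mem_Icc.2 hab.le)) (Icc_mem_nhdsLT hab) (hL.congr' hderiv.symm)
  exact (this.mono Icc_subset_Iic_self).derivWithin
    (uniqueDiffOn_Icc hab _ (right_mem_Icc.2 hab.le))

lemma continuousOn_derivWithin_Icc_of_convexOn (hab : a < b)
    (hF : DifferentiableOn ℝ F (Icc a b)) (hconv : ConvexOn ℝ (Icc a b) (derivWithin F (Icc a b))) :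
    ContinuousOn (derivWithin F (Icc a b)) (Icc a b) := by
  refine hconv.continuousOn_Icc hab ?_ ?_
  · obtain ⟨L, hL⟩ := hconv.exists_tendsto_nhdsGT hab
    rw [← continuousWithinAt_Ioi_iff_Ici, ContinuousWithinAt,
      derivWithin_Icc_left_eq_of_tendsto hab hF hL]
    exact hL
  · obtain ⟨L, hL⟩ := hconv.exists_tendsto_nhdsLT hab
    rw [← continuousWithinAt_Iio_iff_Iic, ContinuousWithinAt,
      derivWithin_Icc_right_eq_of_tendsto hab hF hL]
    exact hL

end Endpoints

section MeanValue

variable {a b x y : ℝ} {F : ℝ → ℝ}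

lemma exists_derivWithin_Icc_eq_slope (hF : DifferentiableOn ℝ F (Icc a b)) (hax : a ≤ x)
    (hxy : x < y) (hyb : y ≤ b) : ∃ ξ ∈ Ioo x y, derivWithin F (Icc a b) ξ = slope F x y := by
  have hsub : Icc x y ⊆ Icc a b := Icc_subset_Icc hax hyb
  obtain ⟨ξ, hξ, hslope⟩ := exists_deriv_eq_slope' F hxy (hF.continuousOn.mono hsub)
    (hF.mono (Ioo_subset_Icc_self.trans hsub))
  refine ⟨ξ, hξ, ?_⟩
  rw [derivWithin_of_mem_nhds (Icc_mem_nhds (hax.trans_lt hξ.1) (hξ.2.trans_le hyb)), hslope]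

lemma exists_abs_derivWithin_sub_le {G : ℝ → ℝ} {η : ℝ} (hF : DifferentiableOn ℝ F (Icc a b))
    (hG : DifferentiableOn ℝ G (Icc a b)) (hax : a ≤ x) (hxy : x < y) (hyb : y ≤ b)
    (hx : |F x - G x| ≤ η) (hy : |F y - G y| ≤ η) :
    ∃ ξ ∈ Ioo x y, ∃ ζ ∈ Ioo x y,
      |derivWithin F (Icc a b) ξ - derivWithin G (Icc a b) ζ| ≤ 2 * η / (y - x) := by
  obtain ⟨ξ, hξ, hFξ⟩ := exists_derivWithin_Icc_eq_slope hF hax hxy hyb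
  obtain ⟨ζ, hζ, hGζ⟩ := exists_derivWithin_Icc_eq_slope hG hax hxy hyb
  refine ⟨ξ, hξ, ζ, hζ, ?_⟩
  have hyx : 0 < y - x := sub_pos.2 hxy
  rw [hFξ, hGζ, slope_def_field, slope_def_field, ← sub_div, abs_div, abs_of_pos hyx]
  gcongr
  calc |F y - F x - (G y - G x)| = |(F y - G y) - (F x - G x)| := by rw [sub_sub_sub_comm]
    _ ≤ |F y - G y| + |F x - G x| := abs_sub _ _
    _ ≤ 2 * η := by linarith

end MeanValue

section Convex

variable {s : Set ℝ} {g : ℝ → ℝ} {t y z : ℝ}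

lemma ConvexOn.sub_abs_sub_le_of_lt (hg : ConvexOn ℝ s g) (ht : t ∈ s) (hz : z ∈ s)
    (hty : t < y) (hyz : y < z) (hgap : y - t ≤ z - y) : g y - |g z - g y| ≤ g t := by
  have hslope := hg.slope_mono_adjacent ht hz hty hyz
  rw [div_le_div_iff₀ (sub_pos.2 hty) (sub_pos.2 hyz)] at hslope
  nlinarith [mul_le_mul_of_nonneg_right (le_abs_self (g z - g y)) (sub_pos.2 hty).le,
    mul_le_mul_of_nonneg_left hgap (abs_nonneg (g z - g y))]

lemma ConvexOn.sub_abs_sub_le_of_gt (hg : ConvexOn ℝ s g) (ht : t ∈ s) (hz : z ∈ s)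
    (hyt : y < t) (hzy : z < y) (hgap : t - y ≤ y - z) : g y - |g z - g y| ≤ g t := by
  have hslope := hg.slope_mono_adjacent hz ht hzy hyt
  rw [div_le_div_iff₀ (sub_pos.2 hzy) (sub_pos.2 hyt)] at hslope
  nlinarith [mul_le_mul_of_nonneg_right (le_abs_self (g z - g y)) (sub_pos.2 hyt).le,
    mul_le_mul_of_nonneg_left hgap (abs_nonneg (g z - g y))]

end Convex

section Uniform

variable {a b : ℝ}

lemma exists_mem_Ioo_abs_derivWithin_sub_lt {F f : ℝ → ℝ} {t x h δ ε : ℝ}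
    (hF : DifferentiableOn ℝ F (Icc a b)) (hf : DifferentiableOn ℝ f (Icc a b))
    (hf' : ∀ u ∈ Icc a b, dist u t < δ →
      |derivWithin f (Icc a b) u - derivWithin f (Icc a b) t| < ε)
    (hFf : ∀ u ∈ Icc a b, |F u - f u| ≤ ε * h / 2) (hh : 0 < h) (hax : a ≤ x) (hxb : x + h ≤ b)
    (htx : t - δ < x) (hxt : x + h < t + δ) :
    ∃ ξ ∈ Ioo x (x + h), |derivWithin F (Icc a b) ξ - derivWithin f (Icc a b) t| < 2 * ε := by
  obtain ⟨ξ, hξ, ζ, hζ, hξζ⟩ := exists_abs_derivWithin_sub_le hF hf hax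
    (lt_add_of_pos_right x hh) hxb (hFf x ⟨hax, by linarith⟩) (hFf (x + h) ⟨by linarith, hxb⟩)
  have hζt := hf' ζ ⟨by linarith [hζ.1], by linarith [hζ.2]⟩
    (by rw [Real.dist_eq, abs_lt]; constructor <;> linarith [hζ.1, hζ.2])
  have hε : 2 * (ε * h / 2) / (x + h - x) = ε := by
    rw [add_sub_cancel_left]
    field_simp
  refine ⟨ξ, hξ, ?_⟩
  calc _ ≤ |derivWithin F (Icc a b) ξ - derivWithin f (Icc a b) ζ|
        + |derivWithin f (Icc a b) ζ - derivWithin f (Icc a b) t| := abs_sub_le _ _ _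
    _ < ε + ε := add_lt_add_of_le_of_lt (hξζ.trans_eq hε) hζt
    _ = 2 * ε := by ring

theorem eventually_forall_derivWithin_sub_le {F : ℕ → ℝ → ℝ} {f : ℝ → ℝ} (hab : a < b)
    (hf : DifferentiableOn ℝ f (Icc a b))
    (hf' : ContinuousOn (derivWithin f (Icc a b)) (Icc a b))
    (hF : ∀ k, DifferentiableOn ℝ (F k) (Icc a b))
    (hF' : ∀ k, ConvexOn ℝ (Icc a b) (derivWithin (F k) (Icc a b)))
    (hFf : TendstoUniformlyOn F f atTop (Icc a b)) {ε : ℝ} (hε : 0 < ε) :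
    ∀ᶠ k in atTop, ∀ t ∈ Icc a b,
      derivWithin f (Icc a b) t - ε ≤ derivWithin (F k) (Icc a b) t := by
  obtain ⟨δ, hδ, hδf'⟩ := Metric.uniformContinuousOn_iff.1
    (isCompact_Icc.uniformContinuousOn_of_continuous hf') (ε / 8) (by positivity)
  -- windows of length `h` at distance at most `3 * h` from `t` fit in `[a, b]` on its longer side
  obtain ⟨h, hh, hhδ, hhab⟩ : ∃ h > 0, 3 * h < δ ∧ 6 * h ≤ b - a :=
    ⟨min (δ / 4) ((b - a) / 6), by positivity, by grind, by grind⟩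
  filter_upwards [Metric.tendstoUniformlyOn_iff.1 hFf (ε / 8 * h / 2) (by positivity)]
    with k hk t ht
  set g := derivWithin (F k) (Icc a b)
  set g₀ := derivWithin f (Icc a b)
  have near : ∀ x, a ≤ x → x + h ≤ b → t - δ < x → x + h < t + δ →
      ∃ ξ ∈ Ioo x (x + h), |g ξ - g₀ t| < 2 * (ε / 8) := fun x =>
    exists_mem_Ioo_abs_derivWithin_sub_lt (hF k) hf
      (fun u hu hut => by simpa only [Real.dist_eq] using hδf' u hu t ht hut)
      (fun u hu => by rw [abs_sub_comm, ← Real.dist_eq]; exact (hk u hu).le) hh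
  suffices ∃ ξ₁ ξ₃, g ξ₁ - |g ξ₃ - g ξ₁| ≤ g t ∧ |g ξ₁ - g₀ t| < 2 * (ε / 8) ∧
      |g ξ₃ - g₀ t| < 2 * (ε / 8) by
    obtain ⟨ξ₁, ξ₃, hcvx, h₁, h₃⟩ := this
    have h₁₃ := abs_sub_le (g ξ₃) (g₀ t) (g ξ₁)
    rw [abs_sub_comm (g₀ t)] at h₁₃
    linarith [(abs_lt.1 h₁).1]
  rcases le_or_gt t ((a + b) / 2) with hmid | hmid
  · obtain ⟨ξ₁, hξ₁, h₁⟩ := near t ht.1 (by linarith) (by linarith) (by linarith)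
    obtain ⟨ξ₃, hξ₃, h₃⟩ :=
      near (t + 2 * h) (by linarith [ht.1]) (by linarith) (by linarith) (by linarith)
    refine ⟨ξ₁, ξ₃, (hF' k).sub_abs_sub_le_of_lt ht ⟨?_, ?_⟩ hξ₁.1 ?_ ?_, h₁, h₃⟩ <;>
      linarith [ht.1, hξ₁.2, hξ₃.1, hξ₃.2]
  · obtain ⟨ξ₁, hξ₁, h₁⟩ :=
      near (t - h) (by linarith) (by linarith [ht.2]) (by linarith) (by linarith)
    obtain ⟨ξ₃, hξ₃, h₃⟩ :=
      near (t - 3 * h) (by linarith) (by linarith [ht.2]) (by linarith) (by linarith)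
    refine ⟨ξ₁, ξ₃, (hF' k).sub_abs_sub_le_of_gt ht ⟨?_, ?_⟩ ?_ ?_ ?_, h₁, h₃⟩ <;>
      linarith [ht.2, hξ₁.1, hξ₁.2, hξ₃.1, hξ₃.2]

end Uniform

theorem tendstoUniformlyOn_of_tendsto_iSup_abs_sub_s6 {ι α : Type*} [TopologicalSpace α]
    {l : Filter ι} {s : Set α} (hs : IsCompact s) {F : ι → α → ℝ} {f : α → ℝ}
    (hF : ∀ i, ContinuousOn (F i) s) (hf : ContinuousOn f s)
    (h : Tendsto (fun i => ⨆ x : s, |F i x - f x|) l (𝓝 0)) : TendstoUniformlyOn F f l s := by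
  refine Metric.tendstoUniformlyOn_iff.2 fun ε hε => ?_
  filter_upwards [h.eventually_lt_const hε] with i hi x hx
  have hbdd : BddAbove (range fun x : s => |F i x - f x|) := by
    rw [← image_eq_range (fun x => |F i x - f x|) s]
    exact hs.bddAbove_image ((hF i).sub hf).abs
  rw [dist_comm, Real.dist_eq]
  exact (le_ciSup hbdd ⟨x, hx⟩).trans_lt hi

theorem Filter.liminf_nonneg_of_forall_eventually_ge {ι : Type*} {l : Filter ι} {u : ι → ℝ}
    (h : ∀ ε > 0, ∀ᶠ i in l, -ε ≤ u i) : 0 ≤ liminf u l := by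
  by_cases hb : IsCoboundedUnder (· ≥ ·) l u
  · exact le_of_forall_pos_le_add fun ε hε =>
      neg_le_iff_add_nonneg.1 (le_liminf_of_le hb (h ε hε))
  · rw [liminf_eq]
    exact (Real.sSup_of_not_bddAbove hb).symm.le

theorem stmt_6 (G : ℕ → ℝ → ℝ)
    (hdiff : ∀ k, DifferentiableOn ℝ (G k) (Icc (0 : ℝ) 1))
    (hconv : ∀ k, ConvexOn ℝ (Icc (0 : ℝ) 1) (fun t => derivWithin (G k) (Icc (0 : ℝ) 1) t))
    (hunif : Tendsto (fun k => ⨆ t : Icc (0 : ℝ) 1, |G k t - G 0 t|) atTop (nhds 0)) :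
    0 ≤ Filter.liminf (fun k => ⨅ t : Icc (0 : ℝ) 1,
        (derivWithin (G k) (Icc (0 : ℝ) 1) t - derivWithin (G 0) (Icc (0 : ℝ) 1) t))
      atTop := by
  have hG : TendstoUniformlyOn G (G 0) atTop (Icc 0 1) :=
    tendstoUniformlyOn_of_tendsto_iSup_abs_sub_s6 isCompact_Icc (fun k => (hdiff k).continuousOn)
      (hdiff 0).continuousOn hunif
  have hG₀' := continuousOn_derivWithin_Icc_of_convexOn zero_lt_one (hdiff 0) (hconv 0)
  refine liminf_nonneg_of_forall_eventually_ge fun ε hε => ?_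
  filter_upwards
    [eventually_forall_derivWithin_sub_le zero_lt_one (hdiff 0) hG₀' hdiff hconv hG hε] with k hk
  exact le_ciInf fun t => by linarith [hk t t.2]
end

section
/- Let X : [0,1] → ℝ be continuous, and let h₁, h₂ : [0,1] → ℝ be square-integrable functions such that for i = 1, 2: (a) the second-order integral Hᵢ of hᵢ (with Hᵢ(0) = Y(0), Hᵢ'(0) = X(0), where Y(t) = ∫₀ᵗ X(s) ds) satisfies Hᵢ(t) ≥ Y(t) on [0,1]; (b) hᵢ is convex on (0,1); (c) Hᵢ(1) = Y(1) and Hᵢ'(1) = X(1); (d) ∫₀¹ (Hᵢ(t) - Y(t)) dhᵢ'(t) = 0. Then h₁ = h₂ almost everywhere on [0,1] (in particular, h₁ = h₂ on (0,1)). -/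
open Set MeasureTheory Filter intervalIntegral Function

private lemma aux_hasDW {f : ℝ → ℝ} (hf : ConvexOn ℝ (Ioo (0:ℝ) 1) f) {t : ℝ}
    (ht : t ∈ Ioo (0:ℝ) 1) : HasDerivWithinAt f (derivWithin f (Ioi t) t) (Ioi t) t := by
  obtain ⟨h0, h1⟩ := ht
  have hne : (Ioo t 1).Nonempty := nonempty_Ioo.2 h1
  have hmono : MonotoneOn (slope f t) (Ioo t 1) := by
    intro x hx y hy hxy
    exact hf.slope_mono ⟨h0, h1⟩ ⟨⟨h0.trans hx.1, hx.2⟩, (ne_of_gt hx.1)⟩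
      ⟨⟨h0.trans hy.1, hy.2⟩, (ne_of_gt hy.1)⟩ hxy
  have hbdd : BddBelow (slope f t '' Ioo t 1) := by
    refine ⟨slope f t (t/2), ?_⟩
    rintro _ ⟨y, hy, rfl⟩
    refine hf.slope_mono ⟨h0, h1⟩ ⟨⟨by linarith, by linarith⟩, by intro h; simp at h; linarith⟩
      ⟨⟨h0.trans hy.1, hy.2⟩, (ne_of_gt hy.1)⟩ (by linarith [hy.1])
  have htd := MonotoneOn.tendsto_nhdsWithin_Ioo_right hne hmono hbdd
  have hd : HasDerivWithinAt f (sInf (slope f t '' Ioo t 1)) (Ioi t) t := by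
    rw [hasDerivWithinAt_iff_tendsto_slope]
    have : Ioi t \ {t} = Ioi t := diff_singleton_eq_self (by simp)
    rw [this]
    exact htd
  have : derivWithin f (Ioi t) t = sInf (slope f t '' Ioo t 1) :=
    hd.derivWithin (uniqueDiffWithinAt_Ioi t)
  rw [this]; exact hd

private lemma aux_slope_lb {f : ℝ → ℝ} (hf : ConvexOn ℝ (Ioo (0:ℝ) 1) f)
    {x y : ℝ} (hx : x ∈ Ioo (0:ℝ) 1) (hy : y ∈ Ioo (0:ℝ) 1) (hxy : x < y) :
    derivWithin f (Ioi x) x ≤ slope f x y :=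
  hf.rightDeriv_le_slope hx hy hxy (aux_hasDW hf hx).differentiableWithinAt

private lemma aux_slope_ub {f : ℝ → ℝ} (hf : ConvexOn ℝ (Ioo (0:ℝ) 1) f)
    {x y : ℝ} (hx : x ∈ Ioo (0:ℝ) 1) (hy : y ∈ Ioo (0:ℝ) 1) (hxy : x < y) :
    slope f x y ≤ derivWithin f (Ioi y) y := by
  have hd := aux_hasDW hf hy
  rw [hasDerivWithinAt_iff_tendsto_slope] at hd
  have heq : Ioi y \ {y} = Ioi y := diff_singleton_eq_self (by simp)
  rw [heq] at hd
  refine ge_of_tendsto hd ?_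
  filter_upwards [Ioo_mem_nhdsGT_of_mem ⟨le_refl y, hy.2⟩] with z hz
  have : slope f x y = slope f y x := slope_comm f x y
  rw [this]
  exact hf.slope_mono hy ⟨hx, (ne_of_lt hxy)⟩
    ⟨⟨hy.1.trans hz.1, hz.2⟩, (ne_of_gt hz.1)⟩ (hxy.le.trans hz.1.le)

private lemma aux_extend {f : ℝ → ℝ} (hf : ConvexOn ℝ (Ioo (0:ℝ) 1) f) (σ : StieltjesFunction ℝ)
    (hσ : ∀ t ∈ Ioo (0:ℝ) 1, σ t = derivWithin f (Ioi t) t) :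
    ∃ F : ℝ → ℝ, Continuous F ∧ EqOn f F (Ioo (0:ℝ) 1) ∧
      (∀ x ∈ Ioo (0:ℝ) 1, HasDerivWithinAt F (σ x) (Ioi x) x) := by
  set K : ℝ := max |σ 0| |σ 1| with hK
  have hKnn : 0 ≤ K := le_max_iff.2 (Or.inl (abs_nonneg _))
  have hslope : ∀ x ∈ Ioo (0:ℝ) 1, ∀ y ∈ Ioo (0:ℝ) 1, x < y → |f y - f x| ≤ K * (y - x) := by
    intro x hx y hy hxy
    have h1 : σ x ≤ slope f x y := by rw [hσ x hx]; exact aux_slope_lb hf hx hy hxy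
    have h2 : slope f x y ≤ σ y := by rw [hσ y hy]; exact aux_slope_ub hf hx hy hxy
    have hb1 : σ (0:ℝ) ≤ σ x := σ.mono hx.1.le
    have hb2 : σ y ≤ σ (1:ℝ) := σ.mono hy.2.le
    have hmK1 : -K ≤ σ (0:ℝ) := neg_le_of_abs_le (le_max_left _ _)
    have hmK2 : σ (1:ℝ) ≤ K := le_of_abs_le (le_max_right _ _)
    have habs : |slope f x y| ≤ K := abs_le.2 ⟨by linarith, by linarith⟩
    have hs : slope f x y = (f y - f x) / (y - x) := slope_def_field f x y
    have hyx : (0:ℝ) < y - x := by linarith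
    calc |f y - f x| = |slope f x y| * (y - x) := by
          rw [hs, abs_div, abs_of_pos hyx, div_mul_cancel₀]
          exact ne_of_gt hyx
      _ ≤ K * (y - x) := mul_le_mul_of_nonneg_right habs hyx.le
  have hlip : LipschitzOnWith (Real.toNNReal K) f (Ioo (0:ℝ) 1) := by
    rw [lipschitzOnWith_iff_dist_le_mul]
    intro x hx y hy
    rw [Real.dist_eq, Real.dist_eq]
    rcases lt_trichotomy x y with h | h | h
    · have h1 : |f x - f y| = |f y - f x| := abs_sub_comm _ _
      have h2 : |x - y| = y - x := by rw [abs_sub_comm]; exact abs_of_pos (by linarith)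
      rw [h1, h2, Real.coe_toNNReal K hKnn]
      exact hslope x hx y hy h
    · simp [h]
    · have h2 : |x - y| = x - y := abs_of_pos (by linarith)
      rw [h2, Real.coe_toNNReal K hKnn]
      exact hslope y hy x hx h
  obtain ⟨F, hFlip, hFeq⟩ := hlip.extend_real
  refine ⟨F, hFlip.continuous, hFeq, ?_⟩
  intro x hx
  have hd : HasDerivWithinAt f (σ x) (Ioi x) x := by
    rw [hσ x hx]; exact aux_hasDW hf hx
  refine hd.congr_of_eventuallyEq ?_ (hFeq hx).symm
  have hmem : Ioo (0:ℝ) 1 ∈ nhdsWithin x (Ioi x) :=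
    mem_nhdsWithin_of_mem_nhds (isOpen_Ioo.mem_nhds hx)
  exact eventually_of_mem hmem (fun y hy => (hFeq hy).symm)

private lemma aux_moment {φ : ℝ → ℝ} (hφ : Continuous φ) (c : ℝ) :
    ∫ s in (0:ℝ)..c, (∫ u in (0:ℝ)..s, φ u) = ∫ u in (0:ℝ)..c, (c - u) * φ u := by
  have huφ : Continuous (fun u : ℝ => u * φ u) := continuous_id.mul hφ
  set G : ℝ → ℝ := fun s => ∫ u in (0:ℝ)..s, φ u with hG
  have hGc : Continuous G :=
    intervalIntegral.continuous_primitive (fun a b => hφ.intervalIntegrable a b) 0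
  have hGd : ∀ x : ℝ, HasDerivAt G (φ x) x := fun x =>
    intervalIntegral.integral_hasDerivAt_right (hφ.intervalIntegrable 0 x)
      hφ.stronglyMeasurable.stronglyMeasurableAtFilter hφ.continuousAt
  set P : ℝ → ℝ := fun c => ∫ u in (0:ℝ)..c, u * φ u with hP
  have hPd : ∀ x : ℝ, HasDerivAt P (x * φ x) x := fun x =>
    intervalIntegral.integral_hasDerivAt_right (huφ.intervalIntegrable 0 x)
      huφ.stronglyMeasurable.stronglyMeasurableAtFilter huφ.continuousAt
  set L : ℝ → ℝ := fun c => ∫ s in (0:ℝ)..c, G s with hL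
  have hLd : ∀ x : ℝ, HasDerivAt L (G x) x := fun x =>
    intervalIntegral.integral_hasDerivAt_right (hGc.intervalIntegrable 0 x)
      hGc.stronglyMeasurable.stronglyMeasurableAtFilter hGc.continuousAt
  set Z : ℝ → ℝ := fun c => L c - c * G c + P c with hZ
  have hZd : ∀ x : ℝ, HasDerivAt Z 0 x := by
    intro x
    have h1 : HasDerivAt (fun c : ℝ => c * G c) (1 * G x + x * φ x) x :=
      (hasDerivAt_id x).mul (hGd x)
    have h2 : HasDerivAt (fun c => L c - c * G c + P c) (G x - (1 * G x + x * φ x) + x * φ x) x :=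
      ((hLd x).sub h1).add (hPd x)
    convert h2 using 1
    ring
  have hconst : ∀ x : ℝ, Z x = Z 0 := by
    intro x
    refine is_const_of_deriv_eq_zero (fun y => (hZd y).differentiableAt) (fun y => (hZd y).deriv) x 0
  have hZ0 : Z 0 = 0 := by simp [hZ, hL, hP]
  have hZc : L c = c * G c - P c := by
    have := hconst c
    rw [hZ0] at this
    simp only [hZ] at this
    linarith
  have hrhs : ∫ u in (0:ℝ)..c, (c - u) * φ u = c * G c - P c := by
    have h1 : ∫ u in (0:ℝ)..c, (c - u) * φ u
        = ∫ u in (0:ℝ)..c, (c * φ u - u * φ u) := by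
      apply intervalIntegral.integral_congr
      intro u _
      ring
    rw [h1, intervalIntegral.integral_sub (f := fun u => c * φ u) (g := fun u => u * φ u) ((continuous_const.mul hφ).intervalIntegrable 0 c)
      (huφ.intervalIntegrable 0 c), intervalIntegral.integral_const_mul]
  rw [hrhs, ← hZc]

private lemma aux_swap (μ ν : Measure ℝ) [IsFiniteMeasure μ] [IsFiniteMeasure ν]
    (k : ℝ × ℝ → ℝ) (hk : Measurable k) (C : ℝ)
    (hbd : ∀ᵐ p ∂(μ.prod ν), |k p| ≤ C) :
    ∫ t, (∫ u, k (t, u) ∂ν) ∂μ = ∫ u, (∫ t, k (t, u) ∂μ) ∂ν := by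
  have hint : Integrable (Function.uncurry (fun t u => k (t, u))) (μ.prod ν) := by
    have huk : Function.uncurry (fun t u => k (t, u)) = k := by
      funext p; rfl
    rw [huk]
    exact (integrable_const C).mono' hk.aestronglyMeasurable
      (hbd.mono fun p hp => by simpa [Real.norm_eq_abs] using hp)
  exact integral_integral_swap hint

private lemma aux_fin_stieltjes (σ : StieltjesFunction ℝ) {s : Set ℝ} (hs : s ⊆ Ioc (0:ℝ) 1) :
    IsFiniteMeasure (σ.measure.restrict s) := by
  constructor
  rw [Measure.restrict_apply_univ]
  calc σ.measure s ≤ σ.measure (Ioc (0:ℝ) 1) := measure_mono hs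
    _ = ENNReal.ofReal (σ 1 - σ 0) := σ.measure_Ioc 0 1
    _ < ⊤ := ENNReal.ofReal_lt_top

private lemma aux_fin_vol {s : Set ℝ} (hs : s ⊆ Ioc (0:ℝ) 1) :
    IsFiniteMeasure (volume.restrict s) := by
  constructor
  rw [Measure.restrict_apply_univ]
  calc volume s ≤ volume (Ioc (0:ℝ) 1) := measure_mono hs
    _ = ENNReal.ofReal 1 := by simp
    _ < ⊤ := ENNReal.ofReal_lt_top

-- the inner kernel of the W computation
private lemma aux_W (σ : StieltjesFunction ℝ) {u : ℝ} (hu : u ∈ Ioc (0:ℝ) 1) :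
    ∫ t in Ioo (0:ℝ) u, (u - t) ∂σ.measure
      = (∫ s in (0:ℝ)..u, σ s) - u * σ 0 := by
  haveI h1 : IsFiniteMeasure (σ.measure.restrict (Ioo (0:ℝ) u)) :=
    aux_fin_stieltjes σ (fun x hx => ⟨hx.1, hx.2.le.trans hu.2⟩)
  haveI h2 : IsFiniteMeasure (volume.restrict (Ioc (0:ℝ) u)) :=
    aux_fin_vol (fun x hx => ⟨hx.1, hx.2.trans hu.2⟩)
  set k : ℝ × ℝ → ℝ := fun p => Set.indicator {q : ℝ × ℝ | q.1 < q.2} (fun _ => (1:ℝ)) p with hk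
  have hkm : Measurable k :=
    Measurable.indicator measurable_const (measurableSet_lt measurable_fst measurable_snd)
  -- step 1 : u - t = ∫ s in Ioc 0 u, k (t,s)
  have hstep1 : ∀ t ∈ Ioo (0:ℝ) u, (u - t) = ∫ s in Ioc (0:ℝ) u, k (t, s) := by
    intro t ht
    have : (fun s => k (t, s)) = (Ioi t).indicator (fun _ => (1:ℝ)) := by
      funext s
      by_cases h : t < s
      · simp [hk, Set.indicator_of_mem, h, mem_Ioi]
      · simp [hk, Set.indicator_of_notMem, h, mem_Ioi]
    rw [this, MeasureTheory.integral_indicator measurableSet_Ioi, Measure.restrict_restrict measurableSet_Ioi]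
    have hinter : Ioi t ∩ Ioc (0:ℝ) u = Ioc t u := by
      ext x; simp only [mem_inter_iff, mem_Ioi, mem_Ioc]
      constructor
      · rintro ⟨hx1, _, hx3⟩; exact ⟨hx1, hx3⟩
      · rintro ⟨hx1, hx2⟩; exact ⟨hx1, ht.1.trans hx1, hx2⟩
    rw [hinter]
    simp [Real.volume_Ioc, ENNReal.toReal_ofReal (by linarith [ht.2] : (0:ℝ) ≤ u - t), ht.2.le]
  -- rewrite the integrand and swap
  have hcong : ∫ t in Ioo (0:ℝ) u, (u - t) ∂σ.measure
      = ∫ t in Ioo (0:ℝ) u, (∫ s in Ioc (0:ℝ) u, k (t, s)) ∂σ.measure := by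
    apply setIntegral_congr_fun measurableSet_Ioo
    intro t ht
    exact hstep1 t ht
  rw [hcong]
  have hswap := aux_swap (σ.measure.restrict (Ioo (0:ℝ) u)) (volume.restrict (Ioc (0:ℝ) u))
    k hkm 1 (Filter.Eventually.of_forall (fun p => by
      by_cases h : p ∈ {q : ℝ × ℝ | q.1 < q.2}
      · simp [hk, Set.indicator_of_mem, h]
      · simp [hk, Set.indicator_of_notMem, h]))
  rw [hswap]
  -- inner integral over the Stieltjes measure
  have hinner : ∀ s ∈ Ioc (0:ℝ) u,
      (∫ t in Ioo (0:ℝ) u, k (t, s) ∂σ.measure) = (σ.measure (Ioo 0 s)).toReal := by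
    intro s hs
    have : (fun t => k (t, s)) = (Iio s).indicator (fun _ => (1:ℝ)) := by
      funext t
      by_cases h : t < s
      · simp [hk, Set.indicator_of_mem, h, mem_Iio]
      · simp [hk, Set.indicator_of_notMem, h, mem_Iio]
    rw [this, MeasureTheory.integral_indicator measurableSet_Iio, Measure.restrict_restrict measurableSet_Iio]
    have hinter : Iio s ∩ Ioo (0:ℝ) u = Ioo 0 s := by
      ext x; simp only [mem_inter_iff, mem_Iio, mem_Ioo]
      constructor
      · rintro ⟨hx1, hx2, _⟩; exact ⟨hx2, hx1⟩
      · rintro ⟨hx1, hx2⟩; exact ⟨hx2, hx1, hx2.trans_le hs.2⟩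
    rw [hinter]
    simp [measureReal_def]
  have hμIoo : ∀ s ∈ Ioc (0:ℝ) u, (σ.measure (Ioo 0 s)).toReal
      = Function.leftLim σ s - σ 0 := by
    intro s hs
    rw [σ.measure_Ioo, ENNReal.toReal_ofReal]
    have : σ 0 ≤ Function.leftLim σ s := σ.mono.le_leftLim hs.1
    linarith
  -- a.e. we can replace leftLim by the value
  have hcount : {s : ℝ | ¬ ContinuousAt σ s}.Countable := σ.mono.countable_not_continuousAt
  have hae : ∀ᵐ s ∂(volume.restrict (Ioc (0:ℝ) u)),
      (∫ t in Ioo (0:ℝ) u, k (t, s) ∂σ.measure) = σ s - σ 0 := by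
    have hnull : volume {s : ℝ | ¬ ContinuousAt σ s} = 0 := hcount.measure_zero _
    have h1 : ∀ᵐ s ∂volume, ContinuousAt σ s := by
      rw [ae_iff]
      exact hnull
    have h2 : ∀ᵐ s ∂(volume.restrict (Ioc (0:ℝ) u)), ContinuousAt σ s := ae_restrict_of_ae h1
    filter_upwards [h2, self_mem_ae_restrict measurableSet_Ioc] with s hcont hs
    rw [hinner s hs, hμIoo s hs]
    have : Function.leftLim σ s = σ s :=
      leftLim_eq_of_tendsto
        (hcont.continuousWithinAt.tendsto)
    rw [this]
  rw [integral_congr_ae hae]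
  have hsint : IntervalIntegrable (fun s => σ s) volume 0 u :=
    (σ.mono.monotoneOn _).intervalIntegrable
  have : ∫ s in Ioc (0:ℝ) u, (σ s - σ 0) = ∫ s in (0:ℝ)..u, (σ s - σ 0) := by
    rw [intervalIntegral.integral_of_le hu.1.le]
  rw [this, intervalIntegral.integral_sub hsint (intervalIntegrable_const)]
  simp

private lemma aux_main (σ : StieltjesFunction ℝ) {g : ℝ → ℝ} (hg : Continuous g) :
    ∫ t in Ioo (0:ℝ) 1, (∫ u in t..(1:ℝ), (u - t) * g u) ∂σ.measure
      = ∫ u in Ioo (0:ℝ) 1, g u * ((∫ s in (0:ℝ)..u, σ s) - u * σ 0) := by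
  haveI h1 : IsFiniteMeasure (σ.measure.restrict (Ioo (0:ℝ) 1)) :=
    aux_fin_stieltjes σ Ioo_subset_Ioc_self
  haveI h2 : IsFiniteMeasure (volume.restrict (Ioo (0:ℝ) 1)) :=
    aux_fin_vol Ioo_subset_Ioc_self
  set k : ℝ × ℝ → ℝ :=
    fun p => Set.indicator {q : ℝ × ℝ | q.1 < q.2} (fun q => (q.2 - q.1) * g q.2) p with hk
  have hkm : Measurable k :=
    Measurable.indicator
      ((continuous_snd.sub continuous_fst).mul (hg.comp continuous_snd)).measurable
      (measurableSet_lt measurable_fst measurable_snd)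
  obtain ⟨C, hC⟩ := isCompact_Icc.exists_bound_of_continuousOn (hg.continuousOn (s := Icc (0:ℝ) 1))
  have hC0 : 0 ≤ C := le_trans (norm_nonneg _) (hC 0 ⟨le_refl 0, zero_le_one⟩)
  -- bound a.e.
  have hbd : ∀ᵐ p ∂((σ.measure.restrict (Ioo (0:ℝ) 1)).prod (volume.restrict (Ioo (0:ℝ) 1))),
      |k p| ≤ C := by
    rw [Measure.prod_restrict]
    filter_upwards [self_mem_ae_restrict (measurableSet_Ioo.prod measurableSet_Ioo)] with p hp
    obtain ⟨hp1, hp2⟩ := (mem_prod.1 hp)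
    by_cases h : p ∈ {q : ℝ × ℝ | q.1 < q.2}
    · have hkp : k p = (p.2 - p.1) * g p.2 := Set.indicator_of_mem h _
      rw [hkp]
      have hgb : |g p.2| ≤ C := by
        have := hC p.2 ⟨hp2.1.le, hp2.2.le⟩
        simpa [Real.norm_eq_abs] using this
      have hd : |p.2 - p.1| ≤ 1 := by
        rw [abs_le]
        constructor <;> [linarith [hp1.1, hp2.2, hp1.2, hp2.1]; linarith [hp1.1, hp2.2]]
      calc |(p.2 - p.1) * g p.2| = |p.2 - p.1| * |g p.2| := abs_mul _ _
        _ ≤ 1 * C := mul_le_mul hd hgb (abs_nonneg _) zero_le_one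
        _ = C := one_mul C
    · have hkp : k p = 0 := Set.indicator_of_notMem h _
      rw [hkp]
      simpa using hC0
  -- rewrite outer integrand
  have hcong : ∫ t in Ioo (0:ℝ) 1, (∫ u in t..(1:ℝ), (u - t) * g u) ∂σ.measure
      = ∫ t in Ioo (0:ℝ) 1, (∫ u in Ioo (0:ℝ) 1, k (t, u)) ∂σ.measure := by
    apply setIntegral_congr_fun measurableSet_Ioo
    intro t ht
    dsimp only
    have hind : (fun u => k (t, u)) = (Ioi t).indicator (fun u => (u - t) * g u) := by
      funext u
      by_cases h : t < u
      · simp [hk, Set.indicator_of_mem, h, mem_Ioi]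
      · simp [hk, Set.indicator_of_notMem, h, mem_Ioi]
    have : ∫ u in Ioo (0:ℝ) 1, k (t, u) = ∫ u in Ioo t 1, (u - t) * g u := by
      rw [hind, MeasureTheory.integral_indicator measurableSet_Ioi,
        Measure.restrict_restrict measurableSet_Ioi]
      congr 1
      rw [show Ioi t ∩ Ioo (0:ℝ) 1 = Ioo t 1 by
        ext x; simp only [mem_inter_iff, mem_Ioi, mem_Ioo]
        exact ⟨fun ⟨a, _, c⟩ => ⟨a, c⟩, fun ⟨a, c⟩ => ⟨a, ht.1.trans a, c⟩⟩]
    rw [this, ← MeasureTheory.integral_Ioc_eq_integral_Ioo,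
      ← intervalIntegral.integral_of_le ht.2.le]
  rw [hcong]
  rw [aux_swap (σ.measure.restrict (Ioo (0:ℝ) 1)) (volume.restrict (Ioo (0:ℝ) 1)) k hkm C hbd]
  apply setIntegral_congr_fun measurableSet_Ioo
  intro u hu
  dsimp only
  have hind : (fun t => k (t, u)) = (Iio u).indicator (fun t => (u - t) * g u) := by
    funext t
    by_cases h : t < u
    · simp [hk, Set.indicator_of_mem, h, mem_Iio]
    · simp [hk, Set.indicator_of_notMem, h, mem_Iio]
  have hstep : ∫ t in Ioo (0:ℝ) 1, k (t, u) ∂σ.measure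
      = ∫ t in Ioo (0:ℝ) u, (u - t) * g u ∂σ.measure := by
    rw [hind, MeasureTheory.integral_indicator measurableSet_Iio,
      Measure.restrict_restrict measurableSet_Iio]
    congr 1
    rw [show Iio u ∩ Ioo (0:ℝ) 1 = Ioo 0 u by
      ext x; simp only [mem_inter_iff, mem_Iio, mem_Ioo]
      exact ⟨fun ⟨a, b, _⟩ => ⟨b, a⟩, fun ⟨a, b⟩ => ⟨b, a, b.trans hu.2⟩⟩]
  rw [hstep, MeasureTheory.integral_mul_const, aux_W σ ⟨hu.1, hu.2.le⟩, mul_comm]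

theorem stmt_9 (X : ℝ → ℝ) (hXc : ContinuousOn X (Icc (0 : ℝ) 1))
    (h₁ h₂ : ℝ → ℝ)
    (hsq₁ : IntegrableOn (fun t => (h₁ t) ^ 2) (Icc (0 : ℝ) 1))
    (hsq₂ : IntegrableOn (fun t => (h₂ t) ^ 2) (Icc (0 : ℝ) 1))
    (Y H₁ H₂ : ℝ → ℝ)
    (hY : ∀ t, Y t = ∫ s in (0 : ℝ)..t, X s)
    (hH₁ : ∀ t, H₁ t = Y 0 + X 0 * t + ∫ s in (0 : ℝ)..t, (∫ u in (0 : ℝ)..s, h₁ u))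
    (hH₂ : ∀ t, H₂ t = Y 0 + X 0 * t + ∫ s in (0 : ℝ)..t, (∫ u in (0 : ℝ)..s, h₂ u))
    -- (a): the invelope dominates Y on [0,1]
    (ha₁ : ∀ t ∈ Icc (0 : ℝ) 1, Y t ≤ H₁ t)
    (ha₂ : ∀ t ∈ Icc (0 : ℝ) 1, Y t ≤ H₂ t)
    -- (b): convexity on (0,1)
    (hb₁ : ConvexOn ℝ (Ioo (0 : ℝ) 1) h₁)
    (hb₂ : ConvexOn ℝ (Ioo (0 : ℝ) 1) h₂)
    -- (c): boundary conditions at 1, for the function and its derivative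
    (hc₁ : H₁ 1 = Y 1) (hc₂ : H₂ 1 = Y 1)
    (hc₁' : X 0 + ∫ u in (0 : ℝ)..1, h₁ u = X 1)
    (hc₂' : X 0 + ∫ u in (0 : ℝ)..1, h₂ u = X 1)
    -- (d): the Stieltjes measures dhᵢ' of the (monotone) right derivatives hᵢ'
    (σ₁ σ₂ : StieltjesFunction ℝ)
    (hσ₁ : ∀ t ∈ Ioo (0 : ℝ) 1, σ₁ t = derivWithin h₁ (Ioi t) t)
    (hσ₂ : ∀ t ∈ Ioo (0 : ℝ) 1, σ₂ t = derivWithin h₂ (Ioi t) t)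
    (hd₁ : ∫ t in Ioo (0 : ℝ) 1, (H₁ t - Y t) ∂σ₁.measure = 0)
    (hd₂ : ∫ t in Ioo (0 : ℝ) 1, (H₂ t - Y t) ∂σ₂.measure = 0) :
    (∀ t ∈ Ioo (0 : ℝ) 1, h₁ t = h₂ t) ∧
      h₁ =ᵐ[volume.restrict (Icc (0 : ℝ) 1)] h₂ := by
  obtain ⟨F₁, hF₁c, hF₁e, hF₁d⟩ := aux_extend hb₁ σ₁ hσ₁
  obtain ⟨F₂, hF₂c, hF₂e, hF₂d⟩ := aux_extend hb₂ σ₂ hσ₂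
  set g : ℝ → ℝ := fun t => F₁ t - F₂ t with hgdef
  have hgc : Continuous g := hF₁c.sub hF₂c
  have hug : Continuous (fun u : ℝ => u * g u) := continuous_id.mul hgc
  -- interval integrals of h coincide with those of F
  have hne1 : ∀ᵐ x : ℝ ∂volume, x ≠ 1 := by
    rw [ae_iff]
    have : {x : ℝ | ¬ x ≠ 1} = {1} := by ext x; simp
    rw [this]
    exact Real.volume_singleton
  have hint : ∀ (h F : ℝ → ℝ), EqOn h F (Ioo (0:ℝ) 1) → ∀ s ∈ Icc (0:ℝ) 1,
      ∫ u in (0:ℝ)..s, h u = ∫ u in (0:ℝ)..s, F u := by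
    intro h F hEq s hs
    apply intervalIntegral.integral_congr_ae
    filter_upwards [hne1] with x hx hxI
    rw [uIoc_of_le hs.1] at hxI
    exact hEq ⟨hxI.1, lt_of_le_of_ne (hxI.2.trans hs.2) hx⟩
  have hint₁ := hint h₁ F₁ hF₁e
  have hint₂ := hint h₂ F₂ hF₂e
  -- FTC bridge
  have hftc : ∀ u ∈ Ioo (0:ℝ) 1, ∫ s in (0:ℝ)..u, (σ₁ s - σ₂ s) = g u - g 0 := by
    intro u hu
    refine integral_eq_sub_of_hasDeriv_right_of_le hu.1.le hgc.continuousOn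
      (fun x hx => ((hF₁d x ⟨hx.1, hx.2.trans hu.2⟩).sub (hF₂d x ⟨hx.1, hx.2.trans hu.2⟩))) ?_
    exact ((σ₁.mono.monotoneOn _).intervalIntegrable).sub ((σ₂.mono.monotoneOn _).intervalIntegrable)
  -- continuous versions of Y, H, D
  set A₁ : ℝ → ℝ := fun s => ∫ u in (0:ℝ)..s, F₁ u with hA₁
  set A₂ : ℝ → ℝ := fun s => ∫ u in (0:ℝ)..s, F₂ u with hA₂
  have hA₁c : Continuous A₁ := intervalIntegral.continuous_primitive
    (fun a b => hF₁c.intervalIntegrable a b) 0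
  have hA₂c : Continuous A₂ := intervalIntegral.continuous_primitive
    (fun a b => hF₂c.intervalIntegrable a b) 0
  set YY : ℝ → ℝ := fun t => ∫ s in (0:ℝ)..t, X s with hYY
  have hXint : IntegrableOn X (Icc (0:ℝ) 1) volume := hXc.integrableOn_Icc
  have hYYc : ContinuousOn YY (Icc (0:ℝ) 1) := by
    have := intervalIntegral.continuousOn_primitive_interval
      (a := (0:ℝ)) (b := (1:ℝ)) (f := X) (μ := volume) ?_
    · rwa [uIcc_of_le zero_le_one] at this
    · rwa [uIcc_of_le zero_le_one]
  set G₁ : ℝ → ℝ := fun t => Y 0 + X 0 * t + ∫ s in (0:ℝ)..t, A₁ s with hG₁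
  set G₂ : ℝ → ℝ := fun t => Y 0 + X 0 * t + ∫ s in (0:ℝ)..t, A₂ s with hG₂
  have hG₁c : Continuous G₁ := by
    apply (continuous_const.add (continuous_const.mul continuous_id)).add
    exact intervalIntegral.continuous_primitive (fun a b => hA₁c.intervalIntegrable a b) 0
  have hG₂c : Continuous G₂ := by
    apply (continuous_const.add (continuous_const.mul continuous_id)).add
    exact intervalIntegral.continuous_primitive (fun a b => hA₂c.intervalIntegrable a b) 0
  have hHG₁ : ∀ t ∈ Icc (0:ℝ) 1, H₁ t = G₁ t := by
    intro t ht
    rw [hH₁ t, hG₁]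
    have : (∫ s in (0:ℝ)..t, ∫ u in (0:ℝ)..s, h₁ u) = ∫ s in (0:ℝ)..t, A₁ s := by
      apply intervalIntegral.integral_congr
      intro s hs
      rw [uIcc_of_le ht.1] at hs
      exact hint₁ s ⟨hs.1, hs.2.trans ht.2⟩
    rw [this]
  have hHG₂ : ∀ t ∈ Icc (0:ℝ) 1, H₂ t = G₂ t := by
    intro t ht
    rw [hH₂ t, hG₂]
    have : (∫ s in (0:ℝ)..t, ∫ u in (0:ℝ)..s, h₂ u) = ∫ s in (0:ℝ)..t, A₂ s := by
      apply intervalIntegral.integral_congr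
      intro s hs
      rw [uIcc_of_le ht.1] at hs
      exact hint₂ s ⟨hs.1, hs.2.trans ht.2⟩
    rw [this]
  set D₁ : ℝ → ℝ := fun t => G₁ t - YY t with hD₁
  set D₂ : ℝ → ℝ := fun t => G₂ t - YY t with hD₂
  have hD₁eq : ∀ t ∈ Icc (0:ℝ) 1, D₁ t = H₁ t - Y t := by
    intro t ht; rw [hD₁]; rw [hHG₁ t ht, hY t]
  have hD₂eq : ∀ t ∈ Icc (0:ℝ) 1, D₂ t = H₂ t - Y t := by
    intro t ht; rw [hD₂]; rw [hHG₂ t ht, hY t]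
  have hD₁c : ContinuousOn D₁ (Icc (0:ℝ) 1) := (hG₁c.continuousOn.sub hYYc)
  have hD₂c : ContinuousOn D₂ (Icc (0:ℝ) 1) := (hG₂c.continuousOn.sub hYYc)
  -- basic zero integrals
  have hZg : ∫ u in (0:ℝ)..1, g u = 0 := by
    have h1 : ∫ u in (0:ℝ)..1, g u = (∫ u in (0:ℝ)..1, F₁ u) - ∫ u in (0:ℝ)..1, F₂ u :=
      intervalIntegral.integral_sub (hF₁c.intervalIntegrable 0 1) (hF₂c.intervalIntegrable 0 1)
    rw [h1, ← hint₁ 1 ⟨zero_le_one, le_refl 1⟩, ← hint₂ 1 ⟨zero_le_one, le_refl 1⟩]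
    linarith
  -- representation of D₁ - D₂
  have hrep : ∀ t, D₁ t - D₂ t = ∫ u in (0:ℝ)..t, (t - u) * g u := by
    intro t
    have h1 : D₁ t - D₂ t = (∫ s in (0:ℝ)..t, A₁ s) - ∫ s in (0:ℝ)..t, A₂ s := by
      simp only [hD₁, hD₂, hG₁, hG₂]; ring
    have h2 : (∫ s in (0:ℝ)..t, A₁ s) - ∫ s in (0:ℝ)..t, A₂ s
        = ∫ s in (0:ℝ)..t, (A₁ s - A₂ s) :=
      (intervalIntegral.integral_sub (hA₁c.intervalIntegrable 0 t)
        (hA₂c.intervalIntegrable 0 t)).symm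
    have h3 : ∫ s in (0:ℝ)..t, (A₁ s - A₂ s) = ∫ s in (0:ℝ)..t, (∫ u in (0:ℝ)..s, g u) := by
      apply intervalIntegral.integral_congr
      intro s _
      exact (intervalIntegral.integral_sub (hF₁c.intervalIntegrable 0 s)
        (hF₂c.intervalIntegrable 0 s)).symm
    rw [h1, h2, h3, aux_moment hgc t]
  have hZD : D₁ 1 - D₂ 1 = 0 := by
    rw [hD₁eq 1 ⟨zero_le_one, le_refl 1⟩, hD₂eq 1 ⟨zero_le_one, le_refl 1⟩, hc₁, hc₂]
    ring
  have hZu : ∫ u in (0:ℝ)..1, u * g u = 0 := by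
    have h1 := hrep 1
    rw [hZD] at h1
    have h2 : ∫ u in (0:ℝ)..1, (1 - u) * g u
        = (∫ u in (0:ℝ)..1, g u) - ∫ u in (0:ℝ)..1, u * g u := by
      rw [← intervalIntegral.integral_sub (hgc.intervalIntegrable 0 1)
        (hug.intervalIntegrable 0 1)]
      apply intervalIntegral.integral_congr
      intro u _
      simp; ring
    rw [← h1] at h2
    rw [hZg] at h2
    linarith
  -- Φ agrees with D₁ - D₂ on Icc 0 1
  set Φ : ℝ → ℝ := fun t => ∫ u in t..(1:ℝ), (u - t) * g u with hΦ
  have hΦD : ∀ t ∈ Icc (0:ℝ) 1, Φ t = D₁ t - D₂ t := by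
    intro t ht
    have hcut : Continuous (fun u : ℝ => (u - t) * g u) :=
      (continuous_id.sub continuous_const).mul hgc
    have htg : Continuous (fun u : ℝ => t * g u) := continuous_const.mul hgc
    have hf1 : IntervalIntegrable (fun u => (u - t) * g u) volume 0 t :=
      hcut.intervalIntegrable 0 t
    have hf2 : IntervalIntegrable (fun u => (u - t) * g u) volume t 1 :=
      hcut.intervalIntegrable t 1
    have hadd := intervalIntegral.integral_add_adjacent_intervals hf1 hf2
    have h01 : ∫ u in (0:ℝ)..1, (u - t) * g u = 0 := by
      have : ∫ u in (0:ℝ)..1, (u - t) * g u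
          = (∫ u in (0:ℝ)..1, u * g u) - ∫ u in (0:ℝ)..1, t * g u := by
        rw [← intervalIntegral.integral_sub (hug.intervalIntegrable 0 1)
          (htg.intervalIntegrable 0 1)]
        apply intervalIntegral.integral_congr
        intro u _
        simp; ring
      rw [this, hZu, intervalIntegral.integral_const_mul, hZg]
      ring
    have hneg : ∫ u in t..(1:ℝ), (u - t) * g u = - ∫ u in (0:ℝ)..t, (u - t) * g u := by
      rw [h01] at hadd; linarith
    have hswap : ∫ u in (0:ℝ)..t, (t - u) * g u = - ∫ u in (0:ℝ)..t, (u - t) * g u := by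
      rw [← intervalIntegral.integral_neg]
      apply intervalIntegral.integral_congr
      intro u _
      ring
    rw [hΦ]
    dsimp only
    rw [hneg, hrep t, hswap]
  -- integrability of D₁ D₂ w.r.t. the Stieltjes measures
  haveI hfin₁ : IsFiniteMeasure (σ₁.measure.restrict (Ioo (0:ℝ) 1)) :=
    aux_fin_stieltjes σ₁ Ioo_subset_Ioc_self
  haveI hfin₂ : IsFiniteMeasure (σ₂.measure.restrict (Ioo (0:ℝ) 1)) :=
    aux_fin_stieltjes σ₂ Ioo_subset_Ioc_self
  have hDint : ∀ (D : ℝ → ℝ), ContinuousOn D (Icc (0:ℝ) 1) → ∀ (σ : StieltjesFunction ℝ),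
      IsFiniteMeasure (σ.measure.restrict (Ioo (0:ℝ) 1)) →
      Integrable D (σ.measure.restrict (Ioo (0:ℝ) 1)) := by
    intro D hDc σ hσfin
    obtain ⟨C, hC⟩ := isCompact_Icc.exists_bound_of_continuousOn hDc
    refine (integrable_const C).mono'
      ((hDc.mono Ioo_subset_Icc_self).aestronglyMeasurable measurableSet_Ioo) ?_
    filter_upwards [self_mem_ae_restrict measurableSet_Ioo] with t ht
    exact hC t (Ioo_subset_Icc_self ht)
  have hDint₁₁ := hDint D₁ hD₁c σ₁ hfin₁
  have hDint₂₁ := hDint D₂ hD₂c σ₁ hfin₁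
  have hDint₁₂ := hDint D₁ hD₁c σ₂ hfin₂
  have hDint₂₂ := hDint D₂ hD₂c σ₂ hfin₂
  -- the hypothesis (d) in terms of D
  have hd₁' : ∫ t in Ioo (0:ℝ) 1, D₁ t ∂σ₁.measure = 0 := by
    have heq : ∫ t in Ioo (0:ℝ) 1, D₁ t ∂σ₁.measure
        = ∫ t in Ioo (0:ℝ) 1, (H₁ t - Y t) ∂σ₁.measure :=
      setIntegral_congr_fun measurableSet_Ioo (fun t ht => hD₁eq t (Ioo_subset_Icc_self ht))
    rw [heq]; exact hd₁
  have hd₂' : ∫ t in Ioo (0:ℝ) 1, D₂ t ∂σ₂.measure = 0 := by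
    have heq : ∫ t in Ioo (0:ℝ) 1, D₂ t ∂σ₂.measure
        = ∫ t in Ioo (0:ℝ) 1, (H₂ t - Y t) ∂σ₂.measure :=
      setIntegral_congr_fun measurableSet_Ioo (fun t ht => hD₂eq t (Ioo_subset_Icc_self ht))
    rw [heq]; exact hd₂
  -- positivity
  have hD₁pos : ∀ t ∈ Ioo (0:ℝ) 1, 0 ≤ D₁ t := by
    intro t ht
    rw [hD₁eq t (Ioo_subset_Icc_self ht)]
    have := ha₁ t (Ioo_subset_Icc_self ht); linarith
  have hD₂pos : ∀ t ∈ Ioo (0:ℝ) 1, 0 ≤ D₂ t := by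
    intro t ht
    rw [hD₂eq t (Ioo_subset_Icc_self ht)]
    have := ha₂ t (Ioo_subset_Icc_self ht); linarith
  -- the two Φ-integrals
  have hsplit : ∀ (σ : StieltjesFunction ℝ),
      Integrable D₁ (σ.measure.restrict (Ioo (0:ℝ) 1)) →
      Integrable D₂ (σ.measure.restrict (Ioo (0:ℝ) 1)) →
      ∫ t in Ioo (0:ℝ) 1, Φ t ∂σ.measure
        = (∫ t in Ioo (0:ℝ) 1, D₁ t ∂σ.measure) - ∫ t in Ioo (0:ℝ) 1, D₂ t ∂σ.measure := by
    intro σ hi1 hi2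
    have h1 : ∫ t in Ioo (0:ℝ) 1, Φ t ∂σ.measure
        = ∫ t in Ioo (0:ℝ) 1, (D₁ t - D₂ t) ∂σ.measure := by
      apply setIntegral_congr_fun measurableSet_Ioo
      intro t ht
      exact hΦD t (Ioo_subset_Icc_self ht)
    rw [h1]
    exact MeasureTheory.integral_sub hi1 hi2
  have hI₂ : 0 ≤ ∫ t in Ioo (0:ℝ) 1, Φ t ∂σ₂.measure := by
    rw [hsplit σ₂ hDint₁₂ hDint₂₂, hd₂']
    have : 0 ≤ ∫ t in Ioo (0:ℝ) 1, D₁ t ∂σ₂.measure :=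
      setIntegral_nonneg measurableSet_Ioo hD₁pos
    linarith
  have hI₁ : ∫ t in Ioo (0:ℝ) 1, Φ t ∂σ₁.measure ≤ 0 := by
    rw [hsplit σ₁ hDint₁₁ hDint₂₁, hd₁']
    have : 0 ≤ ∫ t in Ioo (0:ℝ) 1, D₂ t ∂σ₁.measure :=
      setIntegral_nonneg measurableSet_Ioo hD₂pos
    linarith
  -- Fubini computation of the Φ integrals
  have hm₁ := aux_main σ₁ hgc
  have hm₂ := aux_main σ₂ hgc
  -- continuity of the kernels
  have hK : ∀ (σ : StieltjesFunction ℝ), Continuous (fun u => (∫ s in (0:ℝ)..u, σ s) - u * σ 0) := by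
    intro σ
    exact (intervalIntegral.continuous_primitive
      (fun a b => (σ.mono.monotoneOn _).intervalIntegrable) 0).sub
      (continuous_id.mul continuous_const)
  set K₁ : ℝ → ℝ := fun u => (∫ s in (0:ℝ)..u, σ₁ s) - u * σ₁ 0 with hK₁def
  set K₂ : ℝ → ℝ := fun u => (∫ s in (0:ℝ)..u, σ₂ s) - u * σ₂ 0 with hK₂def
  have hK₁c : Continuous K₁ := hK σ₁
  have hK₂c : Continuous K₂ := hK σ₂
  have hIoOn : ∀ (f : ℝ → ℝ), Continuous f → IntegrableOn f (Ioo (0:ℝ) 1) volume := by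
    intro f hf
    exact (hf.integrableOn_Icc).mono_set Ioo_subset_Icc_self
  -- S = I₂ - I₁ = - ∫ g²
  have hgK₁int : IntegrableOn (fun u => g u * K₁ u) (Ioo (0:ℝ) 1) volume :=
    hIoOn _ (hgc.mul hK₁c)
  have hgK₂int : IntegrableOn (fun u => g u * K₂ u) (Ioo (0:ℝ) 1) volume :=
    hIoOn _ (hgc.mul hK₂c)
  have hm₁' : ∫ t in Ioo (0:ℝ) 1, Φ t ∂σ₁.measure = ∫ u in Ioo (0:ℝ) 1, g u * K₁ u := by
    simpa only [hΦ, hK₁def] using hm₁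
  have hm₂' : ∫ t in Ioo (0:ℝ) 1, Φ t ∂σ₂.measure = ∫ u in Ioo (0:ℝ) 1, g u * K₂ u := by
    simpa only [hΦ, hK₂def] using hm₂
  have hS1 : (∫ t in Ioo (0:ℝ) 1, Φ t ∂σ₂.measure) - (∫ t in Ioo (0:ℝ) 1, Φ t ∂σ₁.measure)
      = ∫ u in Ioo (0:ℝ) 1, (g u * K₂ u - g u * K₁ u) := by
    rw [hm₁', hm₂']
    exact (MeasureTheory.integral_sub hgK₂int hgK₁int).symm
  -- pointwise simplification of the integrand
  set c : ℝ := σ₁ 0 - σ₂ 0 with hc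
  have hpt : ∀ u ∈ Ioo (0:ℝ) 1,
      g u * K₂ u - g u * K₁ u = g 0 * g u + c * (u * g u) - g u * g u := by
    intro u hu
    have h1 : (∫ s in (0:ℝ)..u, σ₁ s) - (∫ s in (0:ℝ)..u, σ₂ s) = g u - g 0 := by
      rw [← intervalIntegral.integral_sub ((σ₁.mono.monotoneOn _).intervalIntegrable)
        ((σ₂.mono.monotoneOn _).intervalIntegrable)]
      exact hftc u hu
    have h2 : K₂ u - K₁ u = g 0 - g u + u * c := by
      rw [hK₁def, hK₂def, hc]
      dsimp only
      linarith
    have : g u * K₂ u - g u * K₁ u = g u * (K₂ u - K₁ u) := by ring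
    rw [this, h2]
    ring
  have hS2 : ∫ u in Ioo (0:ℝ) 1, (g u * K₂ u - g u * K₁ u)
      = ∫ u in Ioo (0:ℝ) 1, (g 0 * g u + c * (u * g u) - g u * g u) := by
    apply setIntegral_congr_fun measurableSet_Ioo
    intro u hu
    exact hpt u hu
  -- zero integrals over Ioo
  have hIoo_g : ∫ u in Ioo (0:ℝ) 1, g u = 0 := by
    rw [← MeasureTheory.integral_Ioc_eq_integral_Ioo, ← intervalIntegral.integral_of_le zero_le_one]
    exact hZg
  have hIoo_ug : ∫ u in Ioo (0:ℝ) 1, u * g u = 0 := by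
    rw [← MeasureTheory.integral_Ioc_eq_integral_Ioo, ← intervalIntegral.integral_of_le zero_le_one]
    exact hZu
  have hS3 : ∫ u in Ioo (0:ℝ) 1, (g 0 * g u + c * (u * g u) - g u * g u)
      = - ∫ u in Ioo (0:ℝ) 1, g u * g u := by
    have hi1 : IntegrableOn (fun u => g 0 * g u) (Ioo (0:ℝ) 1) volume :=
      hIoOn _ (continuous_const.mul hgc)
    have hi2 : IntegrableOn (fun u => c * (u * g u)) (Ioo (0:ℝ) 1) volume :=
      hIoOn _ (continuous_const.mul hug)
    have hi3 : IntegrableOn (fun u => g u * g u) (Ioo (0:ℝ) 1) volume :=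
      hIoOn _ (hgc.mul hgc)
    have e1 : ∫ u in Ioo (0:ℝ) 1, (g 0 * g u + c * (u * g u) - g u * g u)
        = (∫ u in Ioo (0:ℝ) 1, (g 0 * g u + c * (u * g u)))
          - ∫ u in Ioo (0:ℝ) 1, g u * g u := MeasureTheory.integral_sub (hi1.add hi2) hi3
    have e2 : ∫ u in Ioo (0:ℝ) 1, (g 0 * g u + c * (u * g u))
        = (∫ u in Ioo (0:ℝ) 1, g 0 * g u) + ∫ u in Ioo (0:ℝ) 1, c * (u * g u) :=
      MeasureTheory.integral_add hi1 hi2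
    have e3 : ∫ u in Ioo (0:ℝ) 1, g 0 * g u = g 0 * ∫ u in Ioo (0:ℝ) 1, g u :=
      MeasureTheory.integral_const_mul _ _
    have e4 : ∫ u in Ioo (0:ℝ) 1, c * (u * g u) = c * ∫ u in Ioo (0:ℝ) 1, u * g u :=
      MeasureTheory.integral_const_mul _ _
    rw [e1, e2, e3, e4, hIoo_g, hIoo_ug]
    ring
  -- conclude ∫ g² = 0
  have hg2nonneg : 0 ≤ ∫ u in Ioo (0:ℝ) 1, g u * g u :=
    setIntegral_nonneg measurableSet_Ioo (fun u _ => mul_self_nonneg (g u))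
  have hg2zero : ∫ u in Ioo (0:ℝ) 1, g u * g u = 0 := by
    have hS : 0 ≤ (∫ t in Ioo (0:ℝ) 1, Φ t ∂σ₂.measure)
        - (∫ t in Ioo (0:ℝ) 1, Φ t ∂σ₁.measure) := by linarith
    rw [hS1, hS2, hS3] at hS
    linarith
  -- g vanishes on Ioo 0 1
  have hgzero : ∀ u ∈ Ioo (0:ℝ) 1, g u = 0 := by
    by_contra hcon
    push_neg at hcon
    obtain ⟨u₀, hu₀, hgu₀⟩ := hcon
    have hi3 : IntegrableOn (fun u => g u * g u) (Ioo (0:ℝ) 1) volume :=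
      hIoOn _ (hgc.mul hgc)
    have hnn : 0 ≤ᵐ[volume.restrict (Ioo (0:ℝ) 1)] (fun u => g u * g u) :=
      Filter.Eventually.of_forall (fun u => mul_self_nonneg (g u))
    have hae : (fun u => g u * g u) =ᵐ[volume.restrict (Ioo (0:ℝ) 1)] 0 :=
      (MeasureTheory.integral_eq_zero_iff_of_nonneg_ae hnn hi3).1 hg2zero
    have hnull : volume.restrict (Ioo (0:ℝ) 1) {u | g u * g u ≠ 0} = 0 := by
      have h := ae_iff.1 hae
      simpa using h
    set U : Set ℝ := {u | g u ≠ 0} ∩ Ioo (0:ℝ) 1 with hU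
    have hUopen : IsOpen U :=
      ((isOpen_ne_fun hgc continuous_const).inter isOpen_Ioo)
    have hUne : U.Nonempty := ⟨u₀, hgu₀, hu₀⟩
    have hUnull : volume U = 0 := by
      have hsub : U ⊆ {u | g u * g u ≠ 0} ∩ Ioo (0:ℝ) 1 := by
        rintro x ⟨hx1, hx2⟩
        exact ⟨mul_self_ne_zero.2 hx1, hx2⟩
      rw [show volume.restrict (Ioo (0:ℝ) 1) {u | g u * g u ≠ 0}
          = volume ({u | g u * g u ≠ 0} ∩ Ioo (0:ℝ) 1) from
        Measure.restrict_apply' measurableSet_Ioo] at hnull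
      exact measure_mono_null hsub hnull
    exact absurd hUnull (ne_of_gt (hUopen.measure_pos volume hUne))
  -- conclusions
  constructor
  · intro t ht
    have h1 : h₁ t = F₁ t := hF₁e ht
    have h2 : h₂ t = F₂ t := hF₂e ht
    have h3 : F₁ t - F₂ t = 0 := hgzero t ht
    rw [h1, h2]; linarith
  · rw [Filter.EventuallyEq, ae_iff]
    have h1 : {x | ¬ h₁ x = h₂ x} ∩ Icc (0:ℝ) 1 ⊆ {(0:ℝ), 1} := by
      rintro x ⟨hx1, hx2⟩
      by_contra hx3
      simp only [mem_insert_iff, mem_singleton_iff] at hx3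
      push_neg at hx3
      have hxIoo : x ∈ Ioo (0:ℝ) 1 :=
        ⟨lt_of_le_of_ne hx2.1 (Ne.symm hx3.1), lt_of_le_of_ne hx2.2 hx3.2⟩
      apply hx1
      have h1 : h₁ x = F₁ x := hF₁e hxIoo
      have h2 : h₂ x = F₂ x := hF₂e hxIoo
      have h3 : F₁ x - F₂ x = 0 := hgzero x hxIoo
      rw [h1, h2]; linarith
    rw [Measure.restrict_apply' measurableSet_Icc]
    refine measure_mono_null h1 ?_
    exact (Set.countable_insert.2 (Set.countable_singleton 1)).measure_zero _
end

section
/- Let f₀(t) = 2(1−t) for t ∈ [0,1] and 0 otherwise, with distribution function F₀(t) = 2t − t² on [0,1]. Let x₀ ∈ (0,1), c > 0, and let g be a convex function on [0,∞) with g(x₀) = f₀(x₀) + c. Let G(t) = ∫₀ᵗ g. Then |G(x₀) − F₀(x₀)| ≥ c·min(x₀, 1−x₀). -/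
/-!
Let `ℓ(t) = 2(1 - t) + c` be the line through `(x₀, g x₀)` parallel to `f₀`. Since `g - ℓ` is
convex and vanishes at `x₀`, it cannot be negative on both sides of `x₀`. If `ℓ ≤ g` on `[0, x₀]`,
integrating gives `G x₀ ≥ F₀ x₀ + c x₀`. If `ℓ ≤ g` on `[x₀, 1]`, then `∫_{x₀}^1 g` exceeds the
`f₀`-mass `(1 - x₀)²` of that interval by `c (1 - x₀)`, and as `g` has total mass one this mass is
missing from `G x₀`.
-/

open Set MeasureTheory

theorem ConvexOn.nonneg_left_or_nonneg_right_of_eq_zero {𝕜 β : Type*} [Field 𝕜] [LinearOrder 𝕜]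
    [IsStrictOrderedRing 𝕜] [AddCommGroup β] [LinearOrder β] [IsOrderedAddMonoid β]
    [Module 𝕜 β] [PosSMulStrictMono 𝕜 β] {s : Set 𝕜} {f : 𝕜 → β}
    (hf : ConvexOn 𝕜 s f) {x : 𝕜} (hfx : f x = 0) :
    (∀ t ∈ s, t ≤ x → 0 ≤ f t) ∨ ∀ t ∈ s, x ≤ t → 0 ≤ f t := by
  by_contra! h
  obtain ⟨⟨a, ha, hax, hfa⟩, ⟨b, hb, hxb, hfb⟩⟩ := h
  have hx_mem : x ∈ segment 𝕜 a b := by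
    rw [segment_eq_Icc (hax.trans hxb)]
    exact ⟨hax, hxb⟩
  exact (hfx ▸ hf.le_on_segment ha hb hx_mem).not_gt (max_lt hfa hfb)

theorem concaveOn_two_mul_one_sub_add (s : Set ℝ) (hs : Convex ℝ s) (c : ℝ) :
    ConcaveOn ℝ s fun t => 2 * (1 - t) + c := by
  refine ⟨hs, fun x _ y _ a b _ _ hab => ?_⟩
  simp only [smul_eq_mul]
  linear_combination (2 + c) * hab

theorem integral_two_mul_one_sub_add (a b c : ℝ) :
    ∫ t in a..b, (2 * (1 - t) + c) = (2 * b - b ^ 2 + c * b) - (2 * a - a ^ 2 + c * a) := by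
  have h_affine : ∀ t : ℝ, 2 * (1 - t) + c = (2 + c) - 2 * t := fun t => by ring
  simp only [h_affine]
  rw [intervalIntegral.integral_sub intervalIntegrable_const
    (intervalIntegral.intervalIntegrable_id.const_mul 2), intervalIntegral.integral_const_mul,
    intervalIntegral.integral_const, integral_id, smul_eq_mul]
  ring

theorem intervalIntegrable_of_integrableOn_Ici {f : ℝ → ℝ} {a x y : ℝ}
    (hf : IntegrableOn f (Ici a)) (hx : a ≤ x) (hy : a ≤ y) : IntervalIntegrable f volume x y :=
  (hf.mono_set fun _ ht => (le_min hx hy).trans ht.1).intervalIntegrable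

theorem intervalIntegral_le_setIntegral_Ici {f : ℝ → ℝ} {a b : ℝ} (hab : a ≤ b)
    (hf : IntegrableOn f (Ici a)) (hf_nonneg : ∀ t ∈ Ici a, 0 ≤ f t) :
    ∫ t in a..b, f t ≤ ∫ t in Ici a, f t := by
  rw [intervalIntegral.integral_of_le hab]
  exact setIntegral_mono_set hf ((ae_restrict_iff' measurableSet_Ici).2 (ae_of_all _ hf_nonneg))
    (ae_of_all _ fun _ ht => ht.1.le)

theorem stmt_14 (x₀ c : ℝ) (hx₀ : x₀ ∈ Ioo (0 : ℝ) 1) (hc : 0 < c)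
    (g : ℝ → ℝ) (hg_nonneg : ∀ t ∈ Ici (0 : ℝ), 0 ≤ g t)
    (hg_conv : ConvexOn ℝ (Ici (0 : ℝ)) g)
    (hg_int : IntegrableOn g (Ici (0 : ℝ)))
    (hg_one : ∫ t in Ici (0 : ℝ), g t = 1)
    (hval : g x₀ = 2 * (1 - x₀) + c)
    (G F₀ : ℝ → ℝ)
    (hG : ∀ t, G t = ∫ s in (0 : ℝ)..t, g s)
    (hF₀ : ∀ t, F₀ t = 2 * t - t ^ 2) :
    c * min x₀ (1 - x₀) ≤ |G x₀ - F₀ x₀| := by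
  obtain ⟨hx0, hx1⟩ := hx₀
  have hℓ_int : ∀ a b, IntervalIntegrable (fun t : ℝ => 2 * (1 - t) + c) volume a b :=
    (by fun_prop : Continuous fun t : ℝ => 2 * (1 - t) + c).intervalIntegrable
  have hg_sub_ℓ := hg_conv.sub (concaveOn_two_mul_one_sub_add _ (convex_Ici 0) c)
  rcases hg_sub_ℓ.nonneg_left_or_nonneg_right_of_eq_zero (x := x₀) (by simp [hval]) with hleft | hright
  · have h_int := intervalIntegral.integral_mono_on hx0.le (hℓ_int 0 x₀)
      (intervalIntegrable_of_integrableOn_Ici hg_int le_rfl hx0.le)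
      fun t ht => sub_nonneg.1 (hleft t ht.1 ht.2)
    rw [integral_two_mul_one_sub_add] at h_int
    calc c * min x₀ (1 - x₀) ≤ c * x₀ := by gcongr; exact min_le_left _ _
      _ ≤ G x₀ - F₀ x₀ := by rw [hG, hF₀]; linarith
      _ ≤ |G x₀ - F₀ x₀| := le_abs_self _
  · have h_int := intervalIntegral.integral_mono_on hx1.le (hℓ_int x₀ 1)
      (intervalIntegrable_of_integrableOn_Ici hg_int hx0.le zero_le_one)
      fun t ht => sub_nonneg.1 (hright t (hx0.le.trans ht.1) ht.1)
    rw [integral_two_mul_one_sub_add] at h_int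
    have h_mass : G x₀ + ∫ t in x₀..1, g t ≤ 1 := by
      rw [hG, intervalIntegral.integral_add_adjacent_intervals
        (intervalIntegrable_of_integrableOn_Ici hg_int le_rfl hx0.le)
        (intervalIntegrable_of_integrableOn_Ici hg_int hx0.le zero_le_one)]
      exact (intervalIntegral_le_setIntegral_Ici zero_le_one hg_int hg_nonneg).trans hg_one.le
    calc c * min x₀ (1 - x₀) ≤ c * (1 - x₀) := by gcongr; exact min_le_right _ _
      _ ≤ F₀ x₀ - G x₀ := by rw [hF₀]; linarith
      _ ≤ |F₀ x₀ - G x₀| := le_abs_self _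
      _ = |G x₀ - F₀ x₀| := abs_sub_comm _ _
end

section
/- Let f₀(t) = 2(1−t) on [0,1] with DF F₀(t) = 2t − t², x₀ ∈ (0,1), and let g be a nonnegative convex integrable function on [0,∞) with G(t) = ∫₀ᵗ g. If c := g(x₀) − f₀(x₀) < 0, then sup_{t∈[0,x₀]} max(|G(t) − F₀(t)|, |(G(x₀) − F₀(x₀)) − (G(t) − F₀(t))|) ≥ |c| x₀ / 8. -/
/-!
Put `h = g - f₀`, so that `G - F₀` is the primitive of `h` vanishing at `0`, while `h` is convex
with `h x₀ = c < 0`. Take `t = x₀ / 2`. If `h t ≥ 0`, convexity keeps `h` above the line through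
`(t, 0)` and `(x₀, c)` on `[0, t]`, so `∫₀ᵗ h ≥ |c| x₀ / 4`; if `h t ≤ 0`, it keeps `h` below that
line on `[t, x₀]`, so `∫ₜ^x₀ h ≤ -|c| x₀ / 4`.
-/

open Set MeasureTheory intervalIntegral

theorem ConvexOn.sub_mul_le_of_le_of_le {𝕜 : Type*} [Field 𝕜] [LinearOrder 𝕜]
    [IsStrictOrderedRing 𝕜] {s : Set 𝕜} {f : 𝕜 → 𝕜} (hf : ConvexOn 𝕜 s f) {x y z : 𝕜}
    (hx : x ∈ s) (hz : z ∈ s) (hxy : x ≤ y) (hyz : y ≤ z) :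
    (z - x) * f y ≤ (z - y) * f x + (y - x) * f z := by
  rcases hxy.eq_or_lt with rfl | hxy
  · simp
  rcases hyz.eq_or_lt with rfl | hyz
  · simp
  exact hf.secant_mono_aux1 hx hz hxy hyz

theorem integral_const_mul_sub_left (k a b : ℝ) :
    ∫ x in a..b, k * (x - a) = k * (b - a) ^ 2 / 2 := by
  simp
  ring

theorem integral_const_mul_sub_right (k a b : ℝ) :
    ∫ x in a..b, k * (b - x) = k * (b - a) ^ 2 / 2 := by
  simp [integral_sub intervalIntegrable_const intervalIntegral.intervalIntegrable_id]
  ring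

theorem integral_sub_two_mul_one_sub {g : ℝ → ℝ} {t : ℝ} (hg : IntervalIntegrable g volume 0 t) :
    ∫ s in (0 : ℝ)..t, (g s - 2 * (1 - s)) = (∫ s in (0 : ℝ)..t, g s) - (2 * t - t ^ 2) := by
  rw [integral_sub hg (Continuous.intervalIntegrable (by fun_prop) _ _)]
  simp [integral_sub intervalIntegrable_const intervalIntegral.intervalIntegrable_id]
  ring

section ConvexIntegral

variable {f : ℝ → ℝ} {a m b : ℝ}

theorem ConvexOn.neg_mul_sq_div_le_integral_of_nonneg (hf : ConvexOn ℝ (Icc a b) f)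
    (hfi : IntervalIntegrable f volume a m) (ham : a ≤ m) (hmb : m < b) (hfm : 0 ≤ f m) :
    -f b * (m - a) ^ 2 / (2 * (b - m)) ≤ ∫ x in a..m, f x := by
  have hbm : 0 < b - m := sub_pos.2 hmb
  have hline : ∀ x ∈ Icc a m, -f b / (b - m) * (m - x) ≤ f x := by
    intro x hx
    have := hf.sub_mul_le_of_le_of_le ⟨hx.1, hx.2.trans hmb.le⟩
      (right_mem_Icc.2 (ham.trans hmb.le)) hx.2 hmb.le
    rw [div_mul_eq_mul_div, div_le_iff₀ hbm]
    nlinarith [mul_nonneg (sub_nonneg.2 (hx.2.trans hmb.le)) hfm]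
  have := integral_mono_on ham (Continuous.intervalIntegrable (by fun_prop) _ _) hfi hline
  rw [integral_const_mul_sub_right] at this
  convert this using 1
  field_simp

theorem ConvexOn.integral_le_mul_of_nonpos (hf : ConvexOn ℝ (Icc a b) f)
    (hfi : IntervalIntegrable f volume m b) (ham : a ≤ m) (hmb : m < b) (hfm : f m ≤ 0) :
    ∫ x in m..b, f x ≤ f b * (b - m) / 2 := by
  have hbm : 0 < b - m := sub_pos.2 hmb
  have hline : ∀ x ∈ Icc m b, f x ≤ f b / (b - m) * (x - m) := by
    intro x hx
    have := hf.sub_mul_le_of_le_of_le ⟨ham, hmb.le⟩ (right_mem_Icc.2 (ham.trans hmb.le))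
      hx.1 hx.2
    rw [div_mul_eq_mul_div, le_div_iff₀ hbm]
    nlinarith [mul_nonpos_of_nonneg_of_nonpos (sub_nonneg.2 hx.2) hfm]
  have := integral_mono_on hmb.le hfi (Continuous.intervalIntegrable (by fun_prop) _ _) hline
  rw [integral_const_mul_sub_left] at this
  convert this using 1
  field_simp

theorem ConvexOn.neg_mul_le_max_abs_integral_midpoint (hf : ConvexOn ℝ (Icc a b) f)
    (hfi : IntervalIntegrable f volume a b) (hab : a < b) :
    -f b * (b - a) / 4 ≤ max |∫ x in a..(a + b) / 2, f x| |∫ x in (a + b) / 2..b, f x| := by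
  have ham : a ≤ (a + b) / 2 := by linarith
  have hmb : (a + b) / 2 < b := by linarith
  have hm : (a + b) / 2 ∈ uIcc a b := by rw [uIcc_of_le hab.le]; exact ⟨ham, hmb.le⟩
  rcases le_total 0 (f ((a + b) / 2)) with hfm | hfm
  · have := hf.neg_mul_sq_div_le_integral_of_nonneg (hfi.mono_set (uIcc_subset_uIcc_left hm))
      ham hmb hfm
    refine le_max_of_le_left (le_trans (le_of_eq ?_) (this.trans (le_abs_self _)))
    rw [show b - (a + b) / 2 = (b - a) / 2 by ring]
    field_simp [(sub_pos.2 hab).ne']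
    ring
  · have := hf.integral_le_mul_of_nonpos (hfi.mono_set (uIcc_subset_uIcc_right hm)) ham hmb hfm
    refine le_max_of_le_right (le_trans ?_ (neg_le_abs _))
    linarith

end ConvexIntegral

theorem stmt_15_general (x₀ : ℝ) (hx₀ : x₀ ∈ Ioo (0 : ℝ) 1)
    (g : ℝ → ℝ)
    (hg_conv : ConvexOn ℝ (Ici (0 : ℝ)) g)
    (hg_int : IntegrableOn g (Ici (0 : ℝ)))
    (G F₀ : ℝ → ℝ)
    (hG : ∀ t, G t = ∫ s in (0 : ℝ)..t, g s)
    (hF₀ : ∀ t, F₀ t = 2 * t - t ^ 2)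
    (c : ℝ) (hcdef : c = g x₀ - 2 * (1 - x₀)) (hc : c < 0) :
    |c| * x₀ / 8 ≤ ⨆ t : Icc (0 : ℝ) x₀,
      max |G t - F₀ t| |(G x₀ - F₀ x₀) - (G t - F₀ t)| := by
  have hx0 : 0 < x₀ := hx₀.1
  have hgi : ∀ t, 0 ≤ t → IntegrableOn g (uIcc 0 t) := fun t ht =>
    hg_int.mono_set (by rw [uIcc_of_le ht]; exact Icc_subset_Ici_self)
  have hhi : ∀ t, 0 ≤ t → IntervalIntegrable (fun s => g s - 2 * (1 - s)) volume 0 t := fun t ht =>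
    (hgi t ht).intervalIntegrable.sub (Continuous.intervalIntegrable (by fun_prop) _ _)
  have hD : ∀ t, 0 ≤ t → G t - F₀ t = ∫ s in (0 : ℝ)..t, (g s - 2 * (1 - s)) := fun t ht => by
    rw [integral_sub_two_mul_one_sub (hgi t ht).intervalIntegrable, hG, hF₀]
  have hconv : ConvexOn ℝ (Icc 0 x₀) (fun s => g s - 2 * (1 - s)) :=
    (hg_conv.subset Icc_subset_Ici_self (convex_Icc _ _)).add ⟨convex_Icc _ _,
      fun _ _ _ _ _ _ _ _ hab => le_of_eq (by simp only [smul_eq_mul]; linear_combination 2 * hab)⟩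
  have hcont : ContinuousOn (fun t => max |G t - F₀ t| |(G x₀ - F₀ x₀) - (G t - F₀ t)|)
      (Icc 0 x₀) := by
    have hGc : ContinuousOn G (Icc 0 x₀) := by
      simpa [uIcc_of_le hx0.le, ← funext hG] using continuousOn_primitive_interval (hgi x₀ hx0.le)
    simp only [hF₀]
    fun_prop
  have hm : x₀ / 2 ∈ Icc 0 x₀ := ⟨by linarith, by linarith⟩
  calc |c| * x₀ / 8 ≤ -(g x₀ - 2 * (1 - x₀)) * (x₀ - 0) / 4 := by
        rw [abs_of_neg hc, ← hcdef]; nlinarith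
    _ ≤ max |G (x₀ / 2) - F₀ (x₀ / 2)| |(G x₀ - F₀ x₀) - (G (x₀ / 2) - F₀ (x₀ / 2))| := by
        rw [hD _ hm.1, hD _ hx0.le, integral_interval_sub_left (hhi x₀ hx0.le) (hhi _ hm.1)]
        simpa using hconv.neg_mul_le_max_abs_integral_midpoint (hhi x₀ hx0.le) hx0
    _ ≤ _ := le_ciSup_of_le (isCompact_range hcont.domRestrict).bddAbove ⟨x₀ / 2, hm⟩ le_rfl

theorem stmt_15 (x₀ : ℝ) (hx₀ : x₀ ∈ Ioo (0 : ℝ) 1)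
    (g : ℝ → ℝ) (hg_nonneg : ∀ t ∈ Ici (0 : ℝ), 0 ≤ g t)
    (hg_conv : ConvexOn ℝ (Ici (0 : ℝ)) g)
    (hg_int : IntegrableOn g (Ici (0 : ℝ)))
    (G F₀ : ℝ → ℝ)
    (hG : ∀ t, G t = ∫ s in (0 : ℝ)..t, g s)
    (hF₀ : ∀ t, F₀ t = 2 * t - t ^ 2)
    (c : ℝ) (hcdef : c = g x₀ - 2 * (1 - x₀)) (hc : c < 0) :
    |c| * x₀ / 8 ≤ ⨆ t : Icc (0 : ℝ) x₀,
      max |G t - F₀ t| |(G x₀ - F₀ x₀) - (G t - F₀ t)| :=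
  stmt_15_general x₀ hx₀ g hg_conv hg_int G F₀ hG hF₀ c hcdef hc
end
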